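/- arXiv:0906.1559 — 6 statements merged into one kernel-verified Lean document; each statement's English description precedes it below -/
import Mathlib

section
/- Every ℓ-partition λ corresponds uniquely to a triple (μ, r, κ), where μ is an ℓ-core with μ_1 - μ_2 ≠ ℓ-1, r ≥ 0, and κ is a partition with at most r+1 parts; λ is obtained by prepending r rows to μ with successive differences ℓ-1 and then adding κ_i horizontal ℓ-rim hooks to row i for 1 ≤ i ≤ r+1. Conversely, every such triple yields an ℓ-partition. -/
/-- The hook length of the box `(a, b)` (0-indexed row `a`, column `b`)
of the Young diagram `μ`: the number of boxes to the right in its row,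
plus the number of boxes below in its column, plus one. -/
def hookLen (μ : YoungDiagram) (a b : ℕ) : ℕ :=
  μ.rowLen a + μ.colLen b - a - b - 1

/-- A partition (Young diagram) is an `ℓ`-core when no box has hook length
divisible by `ℓ`. -/
def IsCore (ℓ : ℕ) (μ : YoungDiagram) : Prop :=
  ∀ a b : ℕ, (a, b) ∈ μ → ¬ ℓ ∣ hookLen μ a b

/-- Two cells are adjacent if they share an edge. -/
def AdjCell (p q : ℕ × ℕ) : Prop :=
  (p.1 = q.1 ∧ (p.2 = q.2 + 1 ∨ q.2 = p.2 + 1)) ∨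
  (p.2 = q.2 ∧ (p.1 = q.1 + 1 ∨ q.1 = p.1 + 1))

/-- A finite set of cells is connected if any two of its cells are joined by a
path of edge-adjacent cells inside the set. -/
def ConnectedCells (s : Finset (ℕ × ℕ)) : Prop :=
  ∀ p ∈ s, ∀ q ∈ s,
    Relation.ReflTransGen (fun x y => x ∈ s ∧ y ∈ s ∧ AdjCell x y) p q

/-- A set of cells contains no 2×2 square. -/
def No2x2 (s : Finset (ℕ × ℕ)) : Prop :=
  ¬ ∃ a b : ℕ, (a, b) ∈ s ∧ (a + 1, b) ∈ s ∧ (a, b + 1) ∈ s ∧ (a + 1, b + 1) ∈ s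

/-- `s` is a removable `ℓ`-rim hook of the Young diagram `lam`: a connected set of
`ℓ` cells of `lam`, containing no 2×2 square, whose removal from `lam` leaves the
Young diagram of a partition. -/
def IsRemovableRimHook (ℓ : ℕ) (lam : YoungDiagram) (s : Finset (ℕ × ℕ)) : Prop :=
  ∃ μ : YoungDiagram, μ.cells ⊆ lam.cells ∧ s = lam.cells \ μ.cells ∧
    s.card = ℓ ∧ ConnectedCells s ∧ No2x2 s

/-- A set of cells all lying in a single row. -/
def HorizontalCells (s : Finset (ℕ × ℕ)) : Prop := ∀ p ∈ s, ∀ q ∈ s, p.1 = q.1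

/-- A set of cells all lying in a single column. -/
def VerticalCells (s : Finset (ℕ × ℕ)) : Prop := ∀ p ∈ s, ∀ q ∈ s, p.2 = q.2

/-- Carter's condition (⋆): for all pairs of boxes in the same column of `lam`,
`ℓ` divides one hook length iff it divides the other. -/
def StarCond (ℓ : ℕ) (lam : YoungDiagram) : Prop :=
  ∀ a b c : ℕ, (a, c) ∈ lam → (b, c) ∈ lam →
    (ℓ ∣ hookLen lam a c ↔ ℓ ∣ hookLen lam b c)

/-- `b` is obtained from `a` by removing a horizontal `ℓ`-rim hook;
equivalently `a` is obtained from `b` by adding a horizontal `ℓ`-rim hook. -/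
def RemoveHorizHook (ℓ : ℕ) (a b : YoungDiagram) : Prop :=
  ∃ s, IsRemovableRimHook ℓ a s ∧ HorizontalCells s ∧ b.cells = a.cells \ s

/-- A partition is `ℓ`-regular if it has no `ℓ` equal nonzero parts. -/
def Regular (ℓ : ℕ) (lam : YoungDiagram) : Prop :=
  ∀ i : ℕ, lam.rowLen i = lam.rowLen (i + ℓ - 1) → lam.rowLen i = 0

/-- An `ℓ`-partition: an `ℓ`-regular partition each of whose removable `ℓ`-rim hooks
is horizontal, and such that this remains true after removing any sequence of
horizontal `ℓ`-rim hooks. -/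
def IsEllPartition (ℓ : ℕ) (lam : YoungDiagram) : Prop :=
  Regular ℓ lam ∧
  ∀ μ : YoungDiagram, Relation.ReflTransGen (RemoveHorizHook ℓ) lam μ →
    ∀ s, IsRemovableRimHook ℓ μ s → HorizontalCells s

/-- `lam` decomposes as the triple `(μ, r, κ)`: `μ` is an `ℓ`-core with
`μ₁ - μ₂ ≠ ℓ - 1`, `κ` is a partition with at most `r + 1` parts, and `lam` is
obtained from `μ` by prepending `r` rows with successive differences `ℓ - 1` and
adding `κ i` horizontal `ℓ`-rim hooks to row `i` for `0 ≤ i ≤ r` (0-indexed). -/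
def Decomp (ℓ : ℕ) (μ : YoungDiagram) (r : ℕ) (κ : ℕ → ℕ) (lam : YoungDiagram) : Prop :=
  IsCore ℓ μ ∧ μ.rowLen 0 - μ.rowLen 1 ≠ ℓ - 1 ∧
  Antitone κ ∧ (∀ i, r + 1 ≤ i → κ i = 0) ∧
  (∀ i ≤ r, lam.rowLen i = μ.rowLen 0 + (r - i) * (ℓ - 1) + ℓ * κ i) ∧
  (∀ i, 1 ≤ i → lam.rowLen (r + i) = μ.rowLen i)

/-!
Removable `ℓ`-rim hooks correspond to cells of hook length `ℓ`, the rim hook being horizontal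
exactly when the cell has leg length `0`. On James' abacus (the beta-numbers `λ_i - i`) a cell of
hook length `n` in row `a` is a gap `n` positions below the bead of row `a`; hence a diagram without
`ℓ`-hooks has its beads closed under moving `ℓ` down, and so is an `ℓ`-core.

An `ℓ`-partition is decomposed by induction on its size. Without `ℓ`-hooks it is an `ℓ`-core, and
`r` is the first row whose drop to the next row is not `ℓ - 1` (with `κ = 0`). Otherwise its
`ℓ`-hook is horizontal; removing it leaves a smaller `ℓ`-partition with a decomposition
`(μ, r, κ)`, and the removed row is one of the rows `0, …, r`: a row after `r + 1` would contradict
`μ` being a core, and for row `r + 1` stripping horizontal hooks from row `r` would eventually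
expose a vertical `ℓ`-rim hook. Conversely, removing horizontal hooks from a decomposed diagram
only lowers `κ`, and a decomposed diagram has no vertical `ℓ`-rim hook. For uniqueness,
`λ_j - λ_{j+1}` is `ℓ - 1` modulo `ℓ` exactly for `j < r`, and division with remainder by `ℓ`
then recovers the first row of `μ` and `κ`.
-/

theorem Relation.ReflTransGen.exists_cross {α : Type*} {R : α → α → Prop} {P : α → Prop}
    {x y : α} (h : Relation.ReflTransGen R x y) (hx : P x) (hy : ¬ P y) :
    ∃ u v, P u ∧ ¬ P v ∧ R u v := by
  induction h with
  | refl => exact absurd hx hy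
  | @tail b _ _ hbc ih =>
    by_cases hb : P b
    · exact ⟨b, _, hb, hy, hbc⟩
    · exact ih hb

theorem Antitone.update_nat {f : ℕ → ℕ} (hf : Antitone f) {i v : ℕ} (hlt : ∀ j < i, v ≤ f j)
    (hgt : ∀ j > i, f j ≤ v) : Antitone (Function.update f i v) := by
  intro j k hjk
  rcases eq_or_ne j i with rfl | hj <;> rcases eq_or_ne k j with rfl | hk
  · exact le_rfl
  · simpa [Function.update_of_ne hk] using hgt k (by omega)
  · exact le_rfl
  · rcases eq_or_ne k i with rfl | hki
    · simpa [Function.update_of_ne hj] using hlt j (by omega)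
    · simpa [Function.update_of_ne hj, Function.update_of_ne hki] using hf hjk

theorem eq_and_eq_of_add_mul_eq {n a b x y : ℕ} (ha : a < n) (hb : b < n)
    (h : a + n * x = b + n * y) : a = b ∧ x = y := by
  have hn : 0 < n := by omega
  obtain ⟨hx, ha'⟩ := (Nat.div_mod_unique hn).mpr ⟨rfl, ha⟩
  obtain ⟨hy, hb'⟩ := (Nat.div_mod_unique hn).mpr ⟨h.symm, hb⟩
  exact ⟨ha'.symm.trans hb', hx.symm.trans hy⟩

namespace YoungDiagram

theorem ext_rowLen {μ ν : YoungDiagram} (h : ∀ i, μ.rowLen i = ν.rowLen i) : μ = ν := by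
  ext ⟨i, j⟩
  simp only [mem_cells, mem_iff_lt_rowLen, h]

theorem rowLen_eq_zero_of_colLen_le (μ : YoungDiagram) {i : ℕ} (hi : μ.colLen 0 ≤ i) :
    μ.rowLen i = 0 := by
  by_contra h
  have : (i, 0) ∈ μ := mem_iff_lt_rowLen.mpr (Nat.pos_of_ne_zero h)
  exact absurd (mem_iff_lt_colLen.mp this) (not_lt.mpr hi)

theorem mem_cells_sdiff {lam μ : YoungDiagram} {i j : ℕ} :
    (i, j) ∈ lam.cells \ μ.cells ↔ μ.rowLen i ≤ j ∧ j < lam.rowLen i := by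
  rw [Finset.mem_sdiff, mem_cells, mem_cells, mem_iff_lt_rowLen, mem_iff_lt_rowLen, not_lt]
  exact and_comm

theorem cells_subset_iff_rowLen_le {μ ν : YoungDiagram} :
    μ.cells ⊆ ν.cells ↔ ∀ i, μ.rowLen i ≤ ν.rowLen i := by
  refine ⟨fun h i => ?_, fun h ⟨i, j⟩ hij => ?_⟩
  · by_contra hlt
    have hmem : (i, ν.rowLen i) ∈ μ.cells := mem_iff_lt_rowLen.mpr (not_le.mp hlt)
    exact (mem_iff_lt_rowLen.mp (h hmem)).false
  · rw [mem_cells, mem_iff_lt_rowLen] at hij ⊢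
    exact hij.trans_le (h i)

theorem exists_rowLen_eq {f : ℕ → ℕ} (hf : Antitone f) {N : ℕ} (hN : f N = 0) :
    ∃ μ : YoungDiagram, ∀ i, μ.rowLen i = f i := by
  have hmem : ∀ i j, (i, j) ∈ (Finset.range N ×ˢ Finset.range (f 0)).filter
      (fun p => p.2 < f p.1) ↔ j < f i := by
    intro i j
    simp only [Finset.mem_filter, Finset.mem_product, Finset.mem_range]
    refine ⟨And.right, fun hj => ⟨⟨?_, hj.trans_le (hf (Nat.zero_le i))⟩, hj⟩⟩
    by_contra hi
    have := hf (not_lt.mp hi)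
    omega
  let μ : YoungDiagram :=
    { cells := (Finset.range N ×ˢ Finset.range (f 0)).filter (fun p => p.2 < f p.1)
      isLowerSet := by
        rintro ⟨i, j⟩ ⟨i', j'⟩ ⟨hi, hj⟩ h
        rw [Finset.mem_coe, hmem] at h ⊢
        exact (hj.trans_lt h).trans_le (hf hi) }
  exact ⟨μ, fun i => eq_of_forall_lt_iff fun j => by
    rw [← mem_iff_lt_rowLen, ← mem_cells]; exact hmem i j⟩

theorem exists_rowLen_update (lam : YoungDiagram) {i v : ℕ} (hv : lam.rowLen (i + 1) ≤ v)
    (hv' : v ≤ lam.rowLen i) :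
    ∃ ν : YoungDiagram, ν.rowLen i = v ∧ ∀ j ≠ i, ν.rowLen j = lam.rowLen j := by
  have hanti : Antitone (Function.update lam.rowLen i v) := by
    refine antitone_nat_of_succ_le fun j => ?_
    have hj := lam.rowLen_anti j (j + 1) j.le_succ
    rcases eq_or_ne j i with rfl | hji
    · simpa using hv
    rcases eq_or_ne (j + 1) i with rfl | hji'
    · simpa [hji] using hv'.trans (lam.rowLen_anti _ _ j.le_succ)
    · simpa [hji, hji'] using hj
  obtain ⟨ν, hν⟩ := exists_rowLen_eq hanti (N := max (i + 1) (lam.colLen 0)) (by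
    rw [Function.update_of_ne (by omega)]
    exact lam.rowLen_eq_zero_of_colLen_le (le_max_right _ _))
  exact ⟨ν, by simp [hν], fun j hj => by simp [hν, hj]⟩

end YoungDiagram

open YoungDiagram

/-- `lam.cells \ ν.cells` is a border strip occupying rows `a` to `c`: consecutive rows of the
strip overlap in exactly one column. -/
structure IsStrip (ν lam : YoungDiagram) (a c : ℕ) : Prop where
  le : a ≤ c
  rowLen_out : ∀ i, i < a ∨ c < i → ν.rowLen i = lam.rowLen i
  rowLen_succ : ∀ i, a ≤ i → i < c → ν.rowLen i + 1 = lam.rowLen (i + 1)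
  rowLen_lt : ν.rowLen c < lam.rowLen c

namespace IsStrip

variable {ν lam : YoungDiagram} {a c : ℕ}

theorem rowLen_lt_of_mem (h : IsStrip ν lam a c) {i : ℕ} (hai : a ≤ i) (hic : i ≤ c) :
    ν.rowLen i < lam.rowLen i := by
  rcases hic.lt_or_eq with hic | rfl
  · have := h.rowLen_succ i hai hic
    have := lam.rowLen_anti i (i + 1) i.le_succ
    omega
  · exact h.rowLen_lt

theorem rowLen_le (h : IsStrip ν lam a c) (i : ℕ) : ν.rowLen i ≤ lam.rowLen i := by
  by_cases hi : i < a ∨ c < i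
  · exact (h.rowLen_out i hi).le
  · exact (h.rowLen_lt_of_mem (by omega) (by omega)).le

theorem rowLen_succ_le (h : IsStrip ν lam a c) : lam.rowLen (c + 1) ≤ ν.rowLen c := by
  rw [← h.rowLen_out (c + 1) (by omega)]
  exact ν.rowLen_anti c (c + 1) c.le_succ

theorem mem_sdiff (h : IsStrip ν lam a c) {p : ℕ × ℕ} :
    p ∈ lam.cells \ ν.cells ↔
      a ≤ p.1 ∧ p.1 ≤ c ∧ ν.rowLen p.1 ≤ p.2 ∧ p.2 < lam.rowLen p.1 := by
  obtain ⟨i, j⟩ := p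
  rw [mem_cells_sdiff]
  by_cases hi : i < a ∨ c < i
  · have := h.rowLen_out i hi
    simp only
    omega
  · simp only
    omega

theorem sum_Icc_sub_add (h : IsStrip ν lam a c) :
    ∀ d, a + d ≤ c →
      ∑ i ∈ Finset.Icc a (a + d), (lam.rowLen i - ν.rowLen i) + ν.rowLen (a + d) =
        lam.rowLen a + d := by
  intro d
  induction d with
  | zero =>
    intro _
    have := h.rowLen_lt_of_mem le_rfl h.le
    simp only [Nat.add_zero, Finset.Icc_self, Finset.sum_singleton]
    omega
  | succ d ih =>
    intro hd
    rw [← Nat.add_assoc, Finset.sum_Icc_succ_top (by omega)]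
    have := ih (by omega)
    have := h.rowLen_succ (a + d) (by omega) (by omega)
    have := h.rowLen_lt_of_mem (i := a + d + 1) (by omega) (by omega)
    omega

theorem card_sdiff (h : IsStrip ν lam a c) :
    (lam.cells \ ν.cells).card + ν.rowLen c = lam.rowLen a + (c - a) := by
  have hrows : lam.cells \ ν.cells =
      (Finset.Icc a c).biUnion fun i => (Finset.Ico (ν.rowLen i) (lam.rowLen i)).map
        ⟨(i, ·), Prod.mk_right_injective i⟩ := by
    ext ⟨i, j⟩
    simp only [h.mem_sdiff, Finset.mem_biUnion, Finset.mem_Icc, Finset.mem_map,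
      Finset.mem_Ico, Function.Embedding.coeFn_mk, Prod.mk.injEq]
    constructor
    · rintro ⟨hai, hic, hj⟩
      exact ⟨i, ⟨hai, hic⟩, j, hj, rfl, rfl⟩
    · rintro ⟨i, hi, j, hj, rfl, rfl⟩
      exact ⟨hi.1, hi.2, hj⟩
  rw [hrows, Finset.card_biUnion]
  · simp only [Finset.card_map, Nat.card_Ico]
    have := h.sum_Icc_sub_add (c - a) (by have := h.le; omega)
    rwa [Nat.add_sub_cancel' h.le] at this
  · intro i _ i' _ hii'
    simp only [Finset.disjoint_left, Finset.mem_map, Function.Embedding.coeFn_mk]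
    rintro _ ⟨j, -, rfl⟩ ⟨j', -, hj'⟩
    exact hii' (Prod.mk.inj hj').1.symm

end IsStrip

abbrev AdjIn (s : Finset (ℕ × ℕ)) (p q : ℕ × ℕ) : Prop := p ∈ s ∧ q ∈ s ∧ AdjCell p q

section Connectivity

variable {s : Finset (ℕ × ℕ)}

instance : Std.Symm (AdjIn s) :=
  ⟨fun _ _ ⟨hp, hq, hpq⟩ => ⟨hq, hp, by unfold AdjCell at *; omega⟩⟩

theorem reflTransGen_adjCell_row {i j : ℕ} :
    ∀ d, (∀ t ≤ d, (i, j + t) ∈ s) →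
      Relation.ReflTransGen (AdjIn s) (i, j + d) (i, j) := by
  intro d
  induction d with
  | zero => exact fun _ => .refl
  | succ d ih =>
    intro hrow
    exact .head ⟨hrow _ le_rfl, hrow d (by omega), Or.inl ⟨rfl, Or.inl (by omega)⟩⟩
      (ih fun t ht => hrow t (by omega))

theorem connectedCells_of_forall_reflTransGen (o : ℕ × ℕ)
    (h : ∀ p ∈ s, Relation.ReflTransGen (AdjIn s) p o) :
    ConnectedCells s :=
  fun p hp q hq => (h p hp).trans (Std.Symm.symm _ _ (h q hq))

theorem ConnectedCells.exists_vertical_pair (hs : ConnectedCells s) {p q : ℕ × ℕ} (hp : p ∈ s)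
    (hq : q ∈ s) {i : ℕ} (hpi : p.1 ≤ i) (hqi : i < q.1) :
    ∃ j, (i, j) ∈ s ∧ (i + 1, j) ∈ s := by
  obtain ⟨⟨x, y⟩, ⟨x', y'⟩, hx, hx', hu, hv, hadj⟩ :=
    (hs p hp q hq).exists_cross (P := fun u => u.1 ≤ i) hpi (not_le.mpr hqi)
  obtain ⟨rfl, rfl⟩ : x = i ∧ x' = i + 1 := by
    simp only [AdjCell] at hadj hx hx'
    omega
  obtain rfl : y = y' := by
    simp only [AdjCell] at hadj
    omega
  exact ⟨y, hu, hv⟩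

end Connectivity

namespace IsStrip

variable {ν lam : YoungDiagram} {a c : ℕ}

theorem connectedCells (h : IsStrip ν lam a c) : ConnectedCells (lam.cells \ ν.cells) := by
  set s := lam.cells \ ν.cells
  have hrow : ∀ {i j}, (i, j) ∈ s → ∀ {j'}, ν.rowLen i ≤ j' → j' ≤ j →
      Relation.ReflTransGen (AdjIn s) (i, j) (i, j') := by
    intro i j hij j' hj' hjj'
    obtain ⟨d, rfl⟩ := Nat.exists_eq_add_of_le hjj'
    refine reflTransGen_adjCell_row d fun t ht => ?_
    rw [h.mem_sdiff] at hij ⊢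
    simp only at hij ⊢
    omega
  have hdown : ∀ k i j, i + k = c → (i, j) ∈ s →
      Relation.ReflTransGen (AdjIn s) (i, j) (c, ν.rowLen c) := by
    intro k
    induction k with
    | zero =>
      rintro i j rfl hij
      exact hrow hij le_rfl ((h.mem_sdiff.mp hij).2.2.1)
    | succ k ih =>
      intro i j hik hij
      have hij' := h.mem_sdiff.mp hij
      simp only at hij'
      have hstep := h.rowLen_succ i hij'.1 (by omega)
      have hanti := ν.rowLen_anti i (i + 1) i.le_succ
      have hcorner : (i, ν.rowLen i) ∈ s := h.mem_sdiff.mpr (by simp only; omega)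
      have hbelow : (i + 1, ν.rowLen i) ∈ s := h.mem_sdiff.mpr (by simp only; omega)
      refine (hrow hij le_rfl hij'.2.2.1).trans (.head ⟨hcorner, hbelow, ?_⟩
        (ih (i + 1) _ (by omega) hbelow))
      simp [AdjCell]
  refine connectedCells_of_forall_reflTransGen _ fun ⟨i, j⟩ hij => hdown (c - i) i j ?_ hij
  have := (h.mem_sdiff.mp hij).2.1
  omega

theorem no2x2 (h : IsStrip ν lam a c) : No2x2 (lam.cells \ ν.cells) := by
  rintro ⟨x, y, h00, h10, -, h11⟩
  rw [h.mem_sdiff] at h00 h10 h11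
  simp only at h00 h10 h11
  have := h.rowLen_succ x h00.1 (by omega)
  omega

theorem horizontalCells_iff (h : IsStrip ν lam a c) :
    HorizontalCells (lam.cells \ ν.cells) ↔ a = c := by
  constructor
  · intro hor
    exact hor (a, ν.rowLen a)
      (h.mem_sdiff.mpr ⟨le_rfl, h.le, le_rfl, h.rowLen_lt_of_mem le_rfl h.le⟩)
      (c, ν.rowLen c) (h.mem_sdiff.mpr ⟨h.le, le_rfl, le_rfl, h.rowLen_lt⟩)
  · rintro rfl p hp q hq
    have := h.mem_sdiff.mp hp
    have := h.mem_sdiff.mp hq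
    omega

theorem isRemovableRimHook (h : IsStrip ν lam a c) :
    IsRemovableRimHook (lam.cells \ ν.cells).card lam (lam.cells \ ν.cells) :=
  ⟨ν, cells_subset_iff_rowLen_le.mpr h.rowLen_le, rfl, rfl, h.connectedCells, h.no2x2⟩

end IsStrip

theorem IsRemovableRimHook.exists_isStrip {ℓ : ℕ} {lam : YoungDiagram} {s : Finset (ℕ × ℕ)}
    (hs : IsRemovableRimHook ℓ lam s) (hℓ : 0 < ℓ) :
    ∃ ν a c, IsStrip ν lam a c ∧ s = lam.cells \ ν.cells := by
  obtain ⟨ν, hsub, rfl, hcard, hconn, hno2⟩ := hs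
  have hle := cells_subset_iff_rowLen_le.mp hsub
  have hne : (lam.cells \ ν.cells).Nonempty := Finset.card_pos.mp (hcard ▸ hℓ)
  obtain ⟨⟨a, ja⟩, hja, hamin⟩ := (lam.cells \ ν.cells).exists_min_image Prod.fst hne
  obtain ⟨⟨c, jc⟩, hjc, hcmax⟩ := (lam.cells \ ν.cells).exists_max_image Prod.fst hne
  have hout : ∀ i, i < a ∨ c < i → ν.rowLen i = lam.rowLen i := by
    intro i hi
    refine le_antisymm (hle i) (not_lt.mp fun hlt => ?_)
    have hi' : (i, ν.rowLen i) ∈ lam.cells \ ν.cells := mem_cells_sdiff.mpr ⟨le_rfl, hlt⟩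
    have := hamin _ hi'
    have := hcmax _ hi'
    simp only at *
    omega
  have hsucc : ∀ i, a ≤ i → i < c → ν.rowLen i + 1 = lam.rowLen (i + 1) := by
    intro i hai hic
    obtain ⟨j, hj, hj'⟩ := hconn.exists_vertical_pair hja hjc hai hic
    rw [mem_cells_sdiff] at hj hj'
    have := lam.rowLen_anti i (i + 1) i.le_succ
    have := ν.rowLen_anti i (i + 1) i.le_succ
    by_contra hne
    exact hno2 ⟨i, ν.rowLen i, mem_cells_sdiff.mpr (by omega), mem_cells_sdiff.mpr (by omega),
      mem_cells_sdiff.mpr (by omega), mem_cells_sdiff.mpr (by omega)⟩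
  have hc := mem_cells_sdiff.mp hjc
  exact ⟨ν, a, c, ⟨hamin _ hjc, hout, hsucc, by omega⟩, rfl⟩

/-- The cell `(a, m)` of `lam`, whose column ends in row `c`, has hook length `n`. -/
def HookAt (lam : YoungDiagram) (a c m n : ℕ) : Prop :=
  a ≤ c ∧ lam.rowLen (c + 1) ≤ m ∧ m < lam.rowLen c ∧ lam.rowLen a + (c - a) = m + n

section Hooks

variable {ℓ : ℕ} {ν lam : YoungDiagram} {a c m n : ℕ}

theorem IsStrip.hookAt (h : IsStrip ν lam a c) :
    HookAt lam a c (ν.rowLen c) (lam.cells \ ν.cells).card :=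
  ⟨h.le, h.rowLen_succ_le, h.rowLen_lt, by have := h.card_sdiff; omega⟩

theorem HookAt.exists_isStrip (h : HookAt lam a c m n) :
    ∃ ν, IsStrip ν lam a c ∧ ν.rowLen c = m := by
  obtain ⟨hac, hm, hm', -⟩ := h
  -- the maximum is `lam.rowLen (i + 1) - 1` for `a ≤ i < c` and `m` for `i = c`
  let f i := if i < a ∨ c < i then lam.rowLen i else max m (lam.rowLen (i + 1) - 1)
  have hle : ∀ i j, i ≤ j → lam.rowLen j ≤ lam.rowLen i := lam.rowLen_anti
  have hanti : Antitone f := by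
    refine antitone_nat_of_succ_le fun i => ?_
    have := hle i (i + 1) (by omega)
    have := hle (i + 1) (i + 1 + 1) (by omega)
    have := hle i c
    have := hle (c + 1) (i + 1)
    have := hle (i + 1) c
    simp only [f, max_def]
    split_ifs <;> omega
  have hN : f (max (c + 1) (lam.colLen 0)) = 0 := by
    simp only [f, if_pos (Or.inr (lt_of_lt_of_le c.lt_succ_self (le_max_left _ _)))]
    exact lam.rowLen_eq_zero_of_colLen_le (le_max_right _ _)
  obtain ⟨ν, hν⟩ := exists_rowLen_eq hanti hN
  have hνc : ν.rowLen c = m := by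
    rw [hν]
    simp only [f, if_neg (show ¬ (c < a ∨ c < c) by omega)]
    omega
  refine ⟨ν, ⟨hac, fun i hi => by rw [hν]; exact if_pos hi, fun i hai hic => ?_, by omega⟩, hνc⟩
  have := hle (i + 1) c (by omega)
  rw [hν]
  simp only [f, if_neg (show ¬ (i < a ∨ c < i) by omega)]
  omega

def AllHooksHorizontal (ℓ : ℕ) (lam : YoungDiagram) : Prop :=
  ∀ a c m, HookAt lam a c m ℓ → a = c

theorem forall_isRemovableRimHook_horizontal_iff (hℓ : 0 < ℓ) :
    (∀ s, IsRemovableRimHook ℓ lam s → HorizontalCells s) ↔ AllHooksHorizontal ℓ lam := by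
  constructor
  · intro hor a c m hh
    obtain ⟨ν, hstrip, rfl⟩ := hh.exists_isStrip
    have hcard : (lam.cells \ ν.cells).card = ℓ := by
      have := hstrip.card_sdiff
      have := hh.2.2.2
      omega
    exact hstrip.horizontalCells_iff.mp (hor _ (hcard ▸ hstrip.isRemovableRimHook))
  · intro hor s hs
    obtain ⟨ν, a, c, hstrip, rfl⟩ := hs.exists_isStrip hℓ
    obtain ⟨-, -, -, hcard, -⟩ := hs
    exact hstrip.horizontalCells_iff.mpr (hor a c _ (hcard ▸ hstrip.hookAt))

theorem removeHorizHook_iff (hℓ : 0 < ℓ) :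
    RemoveHorizHook ℓ lam ν ↔
      ∃ i, ν.rowLen i + ℓ = lam.rowLen i ∧ ∀ j ≠ i, ν.rowLen j = lam.rowLen j := by
  constructor
  · rintro ⟨s, hs, hor, hν⟩
    obtain ⟨ν', a, c, hstrip, rfl⟩ := hs.exists_isStrip hℓ
    obtain rfl := hstrip.horizontalCells_iff.mp hor
    obtain rfl : ν = ν' := YoungDiagram.ext (by
      rw [hν, Finset.sdiff_sdiff_eq_self (cells_subset_iff_rowLen_le.mpr hstrip.rowLen_le)])
    obtain ⟨-, -, -, hcard, -⟩ := hs
    refine ⟨a, by have := hstrip.card_sdiff; omega, fun j hj => hstrip.rowLen_out j (by omega)⟩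
  · rintro ⟨i, hi, hj⟩
    have hstrip : IsStrip ν lam i i :=
      ⟨le_rfl, fun j hji => hj j (by omega), fun j h h' => absurd h' (by omega), by omega⟩
    have hcard : (lam.cells \ ν.cells).card = ℓ := by
      have := hstrip.card_sdiff
      omega
    refine ⟨_, hcard ▸ hstrip.isRemovableRimHook, hstrip.horizontalCells_iff.mpr rfl, ?_⟩
    rw [Finset.sdiff_sdiff_eq_self (cells_subset_iff_rowLen_le.mpr hstrip.rowLen_le)]

theorem exists_removeHorizHook (hℓ : 0 < ℓ) {i : ℕ}
    (hi : ℓ + lam.rowLen (i + 1) ≤ lam.rowLen i) :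
    ∃ ν, RemoveHorizHook ℓ lam ν ∧ ν.rowLen i + ℓ = lam.rowLen i ∧
      ∀ j ≠ i, ν.rowLen j = lam.rowLen j := by
  obtain ⟨ν, hνi, hνj⟩ :=
    lam.exists_rowLen_update (i := i) (v := lam.rowLen i - ℓ) (by omega) (by omega)
  have hνi' : ν.rowLen i + ℓ = lam.rowLen i := by omega
  exact ⟨ν, (removeHorizHook_iff hℓ).mpr ⟨i, hνi', hνj⟩, hνi', hνj⟩

theorem RemoveHorizHook.card_lt (h : RemoveHorizHook ℓ lam ν)
    (hℓ : 0 < ℓ) : ν.cells.card < lam.cells.card := by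
  obtain ⟨s, ⟨μ, -, rfl, hcard, -⟩, -, hν⟩ := h
  rw [hν]
  exact Finset.card_lt_card (Finset.sdiff_ssubset Finset.sdiff_subset
    (Finset.card_pos.mp (hcard ▸ hℓ)))

theorem AllHooksHorizontal.regular (h : AllHooksHorizontal ℓ lam) (hℓ : 2 ≤ ℓ) :
    Regular ℓ lam := by
  intro i heq
  by_contra hpos
  have hex : ∃ j, lam.rowLen j < lam.rowLen i :=
    ⟨lam.colLen 0, by rw [lam.rowLen_eq_zero_of_colLen_le le_rfl]; omega⟩
  have hmin : ∀ k < Nat.find hex, lam.rowLen i ≤ lam.rowLen k := fun k hk =>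
    not_lt.mp (Nat.find_min hex hk)
  have hfind : i + ℓ ≤ Nat.find hex := by
    by_contra hlt
    have := lam.rowLen_anti (Nat.find hex) (i + ℓ - 1) (by omega)
    have := Nat.find_spec hex
    omega
  obtain ⟨c, hc⟩ : ∃ c, Nat.find hex = c + 1 := ⟨Nat.find hex - 1, by omega⟩
  have := Nat.find_spec hex
  have := hmin c (by omega)
  have := hmin (c + 1 - ℓ) (by omega)
  have := lam.rowLen_anti i (c + 1 - ℓ) (by omega)
  have := h (c + 1 - ℓ) c (lam.rowLen i - 1) ⟨by omega, by rw [← hc]; omega, by omega, by omega⟩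
  omega

theorem isEllPartition_iff (hℓ : 2 ≤ ℓ) :
    IsEllPartition ℓ lam ↔
      ∀ ν, Relation.ReflTransGen (RemoveHorizHook ℓ) lam ν → AllHooksHorizontal ℓ ν := by
  simp only [IsEllPartition, forall_isRemovableRimHook_horizontal_iff (by omega : 0 < ℓ)]
  exact ⟨And.right, fun h => ⟨(h lam .refl).regular hℓ, h⟩⟩

end Hooks

section Cores

variable {ℓ : ℕ} {lam : YoungDiagram} {a c m n : ℕ}

theorem hookAt_iff :
    HookAt lam a c m n ↔ (a, m) ∈ lam ∧ lam.colLen m = c + 1 ∧ hookLen lam a m = n := by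
  simp only [HookAt, hookLen, mem_iff_lt_rowLen]
  constructor
  · rintro ⟨hac, hm, hm', hn⟩
    have := lam.rowLen_anti a c hac
    have hcol : lam.colLen m = c + 1 := by
      have h1 : (c, m) ∈ lam := mem_iff_lt_rowLen.mpr hm'
      have h2 : (c + 1, m) ∉ lam := fun h => (mem_iff_lt_rowLen.mp h).not_ge hm
      rw [mem_iff_lt_colLen] at h1 h2
      omega
    refine ⟨by omega, hcol, by omega⟩
  · rintro ⟨ham, hcol, hn⟩
    have hac : a ≤ c := by
      have := mem_iff_lt_colLen.mp (mem_iff_lt_rowLen.mpr ham)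
      omega
    have h1 : (c, m) ∈ lam := mem_iff_lt_colLen.mpr (by omega)
    have h2 : (c + 1, m) ∉ lam := fun h => by have := mem_iff_lt_colLen.mp h; omega
    rw [mem_iff_lt_rowLen] at h1 h2
    refine ⟨hac, by omega, h1, by omega⟩

theorem isCore_iff_forall_hookAt :
    IsCore ℓ lam ↔ ∀ a c m n, HookAt lam a c m n → ¬ ℓ ∣ n := by
  constructor
  · intro h a c m n hh
    obtain ⟨ham, -, rfl⟩ := hookAt_iff.mp hh
    exact h a m ham
  · intro h a m ham
    have := mem_iff_lt_colLen.mp ham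
    exact h a (lam.colLen m - 1) m _ (hookAt_iff.mpr ⟨ham, by omega, rfl⟩)

theorem IsCore.not_hookAt (h : IsCore ℓ lam) : ¬ HookAt lam a c m ℓ :=
  fun hh => isCore_iff_forall_hookAt.mp h a c m ℓ hh dvd_rfl

theorem IsCore.rowLen_lt (h : IsCore ℓ lam) (hℓ : 0 < ℓ) (j : ℕ) :
    lam.rowLen j < lam.rowLen (j + 1) + ℓ := by
  by_contra hj
  exact h.not_hookAt (a := j) (c := j) (m := lam.rowLen j - ℓ)
    ⟨le_rfl, by omega, by omega, by omega⟩

def beta (lam : YoungDiagram) (i : ℕ) : ℤ := lam.rowLen i - i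

theorem beta_strictAnti : StrictAnti (beta lam) :=
  strictAnti_nat_of_succ_lt fun i => by
    have := lam.rowLen_anti i (i + 1) i.le_succ
    simp only [beta]
    push_cast
    omega

theorem exists_beta_le (lam : YoungDiagram) (x : ℤ) : ∃ j, beta lam j ≤ x :=
  ⟨((lam.rowLen 0 : ℤ) - x).toNat, by
    have := lam.rowLen_anti 0 ((lam.rowLen 0 - x).toNat) (Nat.zero_le _)
    have := Int.self_le_toNat ((lam.rowLen 0 : ℤ) - x)
    simp only [beta]
    omega⟩

theorem exists_hookAt_iff :
    (∃ c m, HookAt lam a c m n) ↔ beta lam a - n ∉ Set.range (beta lam) := by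
  constructor
  · rintro ⟨c, m, hac, hm, hm', hn⟩ ⟨i, hi⟩
    have := lam.rowLen_anti a c hac
    rcases le_or_gt i c with hic | hic
    · have := (beta_strictAnti (lam := lam)).antitone hic
      simp only [beta] at *
      omega
    · have := (beta_strictAnti (lam := lam)).antitone (show c + 1 ≤ i by omega)
      simp only [beta] at *
      push_cast at *
      omega
  · intro hgap
    set g := beta lam a - n
    have hex := exists_beta_le lam g
    have hlt : beta lam (Nat.find hex) < g :=
      (Nat.find_spec hex).lt_of_ne fun h => hgap ⟨_, h⟩
    have hpos : 0 < n := Nat.pos_of_ne_zero fun h => hgap ⟨a, by simp [g, h]⟩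
    have ha : a < Nat.find hex := by
      by_contra h
      have := (beta_strictAnti (lam := lam)).antitone (not_lt.mp h)
      omega
    -- the hook ends in the last row `c` whose bead lies above the gap `g`
    obtain ⟨c, hc⟩ : ∃ c, Nat.find hex = c + 1 := ⟨Nat.find hex - 1, by omega⟩
    have hgc : g < beta lam c := not_le.mp (Nat.find_min hex (by omega))
    rw [hc] at hlt
    simp only [beta, g] at hlt hgc
    push_cast at hlt
    obtain ⟨m, hm⟩ : ∃ m : ℕ, (m : ℤ) = lam.rowLen a - a - n + c :=
      ⟨(lam.rowLen a - a - n + c : ℤ).toNat, Int.toNat_of_nonneg (by omega)⟩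
    refine ⟨c, m, by omega, by omega, by omega, by omega⟩

theorem isCore_of_forall_not_hookAt (h : ∀ a c m, ¬ HookAt lam a c m ℓ) : IsCore ℓ lam := by
  have hclosed : ∀ x ∈ Set.range (beta lam), x - ℓ ∈ Set.range (beta lam) := by
    rintro _ ⟨i, rfl⟩
    by_contra hx
    obtain ⟨c, m, hh⟩ := exists_hookAt_iff.mpr hx
    exact h i c m hh
  have hmul : ∀ x ∈ Set.range (beta lam), ∀ k : ℕ, x - ℓ * k ∈ Set.range (beta lam) := by
    intro x hx k
    induction k with
    | zero => simpa using hx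
    | succ k ih => simpa [mul_add, sub_add_eq_sub_sub] using hclosed _ ih
  rw [isCore_iff_forall_hookAt]
  rintro a c m _ hh ⟨k, rfl⟩
  exact exists_hookAt_iff.mp ⟨c, m, hh⟩ (by simpa using hmul _ ⟨a, rfl⟩ k)

end Cores

namespace Decomp

variable {ℓ r : ℕ} {μ lam ν : YoungDiagram} {κ : ℕ → ℕ}

theorem isCore (hd : Decomp ℓ μ r κ lam) : IsCore ℓ μ := hd.1

theorem top_sub_ne (hd : Decomp ℓ μ r κ lam) : μ.rowLen 0 - μ.rowLen 1 ≠ ℓ - 1 := hd.2.1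

theorem antitone (hd : Decomp ℓ μ r κ lam) : Antitone κ := hd.2.2.1

theorem kappa_eq_zero (hd : Decomp ℓ μ r κ lam) {i : ℕ} (hi : r < i) : κ i = 0 :=
  hd.2.2.2.1 i hi

theorem rowLen_of_le (hd : Decomp ℓ μ r κ lam) {i : ℕ} (hi : i ≤ r) :
    lam.rowLen i = μ.rowLen 0 + (r - i) * (ℓ - 1) + ℓ * κ i :=
  hd.2.2.2.2.1 i hi

theorem rowLen_add (hd : Decomp ℓ μ r κ lam) {i : ℕ} (hi : 1 ≤ i) :
    lam.rowLen (r + i) = μ.rowLen i :=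
  hd.2.2.2.2.2 i hi

theorem mul_kappa_le (hd : Decomp ℓ μ r κ lam) {i j : ℕ} (hij : i ≤ j) : ℓ * κ j ≤ ℓ * κ i :=
  Nat.mul_le_mul_left ℓ (hd.antitone hij)

theorem rowLen_self (hd : Decomp ℓ μ r κ lam) : lam.rowLen r = μ.rowLen 0 + ℓ * κ r := by
  simpa using hd.rowLen_of_le le_rfl

theorem rowLen_of_lt (hd : Decomp ℓ μ r κ lam) {j : ℕ} (hj : j < r) :
    lam.rowLen j + ℓ * κ (j + 1) = lam.rowLen (j + 1) + (ℓ - 1) + ℓ * κ j := by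
  have h := hd.rowLen_of_le hj.le
  have h' := hd.rowLen_of_le (i := j + 1) hj
  have : (r - j) * (ℓ - 1) = (r - (j + 1)) * (ℓ - 1) + (ℓ - 1) := by
    rw [show r - j = r - (j + 1) + 1 by omega, Nat.succ_mul]
  omega

theorem rowLen_succ_self (hd : Decomp ℓ μ r κ lam) : lam.rowLen (r + 1) = μ.rowLen 1 :=
  hd.rowLen_add le_rfl

theorem rowLen_of_gt (hd : Decomp ℓ μ r κ lam) {i : ℕ} (hi : r < i) :
    lam.rowLen i = μ.rowLen (i - r) := by
  simpa [Nat.add_sub_cancel' hi.le] using hd.rowLen_add (i := i - r) (by omega)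

theorem top_lt (hd : Decomp ℓ μ r κ lam) (hℓ : 0 < ℓ) : μ.rowLen 0 < μ.rowLen 1 + (ℓ - 1) := by
  have := by simpa using hd.isCore.rowLen_lt hℓ 0
  have := μ.rowLen_anti 0 1 zero_le_one
  have := hd.top_sub_ne
  omega

theorem allHooksHorizontal (hd : Decomp ℓ μ r κ lam) : AllHooksHorizontal ℓ lam := by
  rintro a c m ⟨hac, hm, hm', hn⟩
  by_contra hne
  rcases lt_trichotomy a r with har | rfl | har
  · have := hd.rowLen_of_lt har
    have := hd.mul_kappa_le (show a ≤ a + 1 by omega)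
    have := lam.rowLen_anti (a + 1) c (by omega)
    omega
  · have hc := hd.rowLen_of_gt (i := c) (by omega)
    have hc' := hd.rowLen_of_gt (i := c + 1) (by omega)
    have := hd.rowLen_self
    rw [show c + 1 - a = c - a + 1 by omega] at hc'
    rcases Nat.eq_zero_or_pos (κ a) with hκ | hκ
    · have : ℓ * κ a = 0 := by rw [hκ, mul_zero]
      exact hd.isCore.not_hookAt (a := 0) (c := c - a) (m := m)
        ⟨by omega, by omega, by omega, by omega⟩
    · have : ℓ ≤ ℓ * κ a := Nat.le_mul_of_pos_right ℓ hκ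
      have := μ.rowLen_anti 1 (c - a) (by omega)
      have := μ.rowLen_anti 0 1 zero_le_one
      omega
  · have ha := hd.rowLen_of_gt har
    have hc := hd.rowLen_of_gt (i := c) (by omega)
    have hc' := hd.rowLen_of_gt (i := c + 1) (by omega)
    rw [show c + 1 - r = c - r + 1 by omega] at hc'
    exact hd.isCore.not_hookAt (a := a - r) (c := c - r) (m := m)
      ⟨by omega, by omega, by omega, by omega⟩

theorem le_of_drop (hd : Decomp ℓ μ r κ lam) (hℓ : 0 < ℓ) {i : ℕ}
    (hdrop : lam.rowLen (i + 1) + ℓ ≤ lam.rowLen i) : i ≤ r := by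
  by_contra hir
  have := hd.rowLen_of_gt (i := i) (by omega)
  have := hd.rowLen_of_gt (i := i + 1) (by omega)
  have := hd.isCore.rowLen_lt hℓ (i - r)
  rw [show i + 1 - r = i - r + 1 by omega] at *
  omega

theorem kappa_lt_of_drop (hd : Decomp ℓ μ r κ lam) (hℓ : 0 < ℓ) {i j : ℕ}
    (hdrop : lam.rowLen (i + 1) + ℓ ≤ lam.rowLen i) (hij : i < j) : κ j < κ i := by
  rcases (hd.le_of_drop hℓ hdrop).lt_or_eq with hir | rfl
  · have := hd.rowLen_of_lt hir
    have := hd.antitone (show i + 1 ≤ j by omega)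
    by_contra h
    have := Nat.mul_le_mul_left ℓ (show κ i ≤ κ (i + 1) by omega)
    omega
  · rw [hd.kappa_eq_zero hij]
    have := hd.rowLen_self
    have := hd.rowLen_succ_self
    have := by simpa using hd.isCore.rowLen_lt hℓ 0
    by_contra h
    have : κ i = 0 := by omega
    simp only [this, mul_zero] at *
    omega

theorem of_removeRow (hd : Decomp ℓ μ r κ lam) (hℓ : 0 < ℓ) {i : ℕ}
    (hνi : ν.rowLen i + ℓ = lam.rowLen i) (hνj : ∀ j ≠ i, ν.rowLen j = lam.rowLen j) :
    Decomp ℓ μ r (Function.update κ i (κ i - 1)) ν := by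
  have hdrop : lam.rowLen (i + 1) + ℓ ≤ lam.rowLen i := by
    have := hνj (i + 1) (by omega)
    have := ν.rowLen_anti i (i + 1) (by omega)
    omega
  have hir := hd.le_of_drop hℓ hdrop
  refine ⟨hd.isCore, hd.top_sub_ne,
    hd.antitone.update_nat (fun j hj => (Nat.sub_le _ _).trans (hd.antitone hj.le))
      (fun j hj => Nat.le_sub_one_of_lt (hd.kappa_lt_of_drop hℓ hdrop hj)),
    fun j hj => ?_, fun j hjr => ?_, fun j hj => ?_⟩
  · rw [Function.update_of_ne (by omega), hd.kappa_eq_zero (by omega)]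
  · rcases eq_or_ne j i with rfl | hji
    · have := hd.rowLen_of_le hjr
      have := hd.kappa_lt_of_drop hℓ hdrop (j := r + 1) (by omega)
      rw [Function.update_self, Nat.mul_sub_one ℓ (κ j)]
      have := Nat.le_mul_of_pos_right ℓ (show 0 < κ j by omega)
      omega
    · rw [Function.update_of_ne hji, hνj j hji]
      exact hd.rowLen_of_le hjr
  · rw [hνj _ (by omega)]
    exact hd.rowLen_add hj

theorem of_reflTransGen (hd : Decomp ℓ μ r κ lam) (hℓ : 0 < ℓ)
    (h : Relation.ReflTransGen (RemoveHorizHook ℓ) lam ν) : ∃ κ', Decomp ℓ μ r κ' ν := by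
  induction h with
  | refl => exact ⟨κ, hd⟩
  | tail _ hrem ih =>
    obtain ⟨κ', hd'⟩ := ih
    obtain ⟨i, hi, hj⟩ := (removeHorizHook_iff hℓ).mp hrem
    exact ⟨_, hd'.of_removeRow hℓ hi hj⟩

theorem isEllPartition (hd : Decomp ℓ μ r κ lam) (hℓ : 2 ≤ ℓ) : IsEllPartition ℓ lam := by
  rw [isEllPartition_iff hℓ]
  intro ν hν
  obtain ⟨κ', hd'⟩ := hd.of_reflTransGen (by omega) hν
  exact hd'.allHooksHorizontal

/-- The row `r` is the first row whose difference with the next one is not `ℓ - 1` modulo `ℓ`. -/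
theorem le_of_decomp {μ' : YoungDiagram} {r' : ℕ} {κ' : ℕ → ℕ} (hd : Decomp ℓ μ r κ lam)
    (hd' : Decomp ℓ μ' r' κ' lam) (hℓ : 0 < ℓ) : r' ≤ r := by
  by_contra hr
  have := hd'.rowLen_of_lt (j := r) (by omega)
  have := hd.rowLen_self
  have := hd.rowLen_succ_self
  have := hd.top_lt hℓ
  have := μ.rowLen_anti 0 1 zero_le_one
  have key := eq_and_eq_of_add_mul_eq (n := ℓ) (a := μ.rowLen 0 - μ.rowLen 1)
    (x := κ r + κ' (r + 1)) (b := ℓ - 1) (y := κ' r) (by omega) (by omega) (by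
      rw [mul_add]
      omega)
  exact hd.top_sub_ne key.1

theorem unique {μ' : YoungDiagram} {r' : ℕ} {κ' : ℕ → ℕ} (hd : Decomp ℓ μ r κ lam)
    (hd' : Decomp ℓ μ' r' κ' lam) (hℓ : 0 < ℓ) : μ = μ' ∧ r = r' ∧ κ = κ' := by
  obtain rfl : r = r' := le_antisymm (hd'.le_of_decomp hd hℓ) (hd.le_of_decomp hd' hℓ)
  have htail : ∀ i, 1 ≤ i → μ.rowLen i = μ'.rowLen i := fun i hi => by
    rw [← hd.rowLen_add hi, ← hd'.rowLen_add hi]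
  have h1 := htail 1 le_rfl
  have := μ.rowLen_anti 0 1 zero_le_one
  have := μ'.rowLen_anti 0 1 zero_le_one
  have := hd.top_lt hℓ
  have := hd'.top_lt hℓ
  have htop := eq_and_eq_of_add_mul_eq (n := ℓ) (a := μ.rowLen 0 - μ.rowLen 1) (x := κ r)
    (b := μ'.rowLen 0 - μ'.rowLen 1) (y := κ' r) (by omega) (by omega) (by
      have := hd.rowLen_self
      have := hd'.rowLen_self
      omega)
  obtain rfl : μ = μ' := YoungDiagram.ext_rowLen fun i => by
    rcases i with _ | i
    · omega
    · exact htail _ (by omega)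
  refine ⟨rfl, rfl, funext fun i => ?_⟩
  rcases le_or_gt i r with hi | hi
  · have := hd.rowLen_of_le hi
    have := hd'.rowLen_of_le hi
    exact Nat.eq_of_mul_eq_mul_left hℓ (by omega)
  · rw [hd.kappa_eq_zero hi, hd'.kappa_eq_zero hi]

end Decomp

theorem exists_decomp_of_isCore {ℓ : ℕ} {lam : YoungDiagram} (hℓ : 2 ≤ ℓ) (h : IsCore ℓ lam) :
    ∃ μ r, Decomp ℓ μ r 0 lam := by
  have hex : ∃ j, lam.rowLen j ≠ lam.rowLen (j + 1) + (ℓ - 1) := ⟨lam.colLen 0, by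
    rw [lam.rowLen_eq_zero_of_colLen_le le_rfl, lam.rowLen_eq_zero_of_colLen_le (by omega)]
    omega⟩
  obtain ⟨r, hr, hmin⟩ : ∃ r, lam.rowLen r ≠ lam.rowLen (r + 1) + (ℓ - 1) ∧
      ∀ j < r, lam.rowLen j = lam.rowLen (j + 1) + (ℓ - 1) :=
    ⟨Nat.find hex, Nat.find_spec hex, fun j hj => not_not.mp (Nat.find_min hex hj)⟩
  have hsteps : ∀ d ≤ r, lam.rowLen (r - d) = lam.rowLen r + d * (ℓ - 1) := by
    intro d
    induction d with
    | zero => simp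
    | succ d ih =>
      intro hd
      have := hmin (r - (d + 1)) (by omega)
      rw [show r - (d + 1) + 1 = r - d by omega, ih (by omega)] at this
      rw [this, Nat.succ_mul]
      omega
  obtain ⟨μ, hμ⟩ := exists_rowLen_eq (f := fun i => lam.rowLen (r + i))
    (fun i j hij => lam.rowLen_anti _ _ (by omega)) (N := lam.colLen 0)
    (lam.rowLen_eq_zero_of_colLen_le (by omega))
  refine ⟨μ, r, ?_, ?_, antitone_const, fun _ _ => rfl, fun i hi => ?_, fun i _ => (hμ i).symm⟩
  · rw [isCore_iff_forall_hookAt] at h ⊢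
    rintro a c m n ⟨hac, hm, hm', hn⟩
    simp only [hμ, ← Nat.add_assoc] at hm hm' hn
    exact h (r + a) (r + c) m n ⟨by omega, hm, hm', by omega⟩
  · have := lam.rowLen_anti r (r + 1) (by omega)
    simp only [hμ, Nat.add_zero]
    omega
  · have := hsteps (r - i) (by omega)
    simp only [hμ, Nat.add_zero, Pi.zero_apply, Nat.mul_zero]
    rwa [Nat.sub_sub_self hi] at this

/-- Once row `R` is stripped down to `A + ℓ`, the cell `(R, A + 1)` has hook length `ℓ` and leg
length `1`. -/
theorem exists_reflTransGen_not_allHooksHorizontal {ℓ : ℕ} (hℓ : 0 < ℓ) {A B R : ℕ}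
    (hBA : B ≤ A) (hAB : A + 2 ≤ B + ℓ) :
    ∀ k (ν : YoungDiagram), ν.rowLen R = A + ℓ * (k + 1) → ν.rowLen (R + 1) = B + ℓ →
      ν.rowLen (R + 2) ≤ B →
      ∃ σ, Relation.ReflTransGen (RemoveHorizHook ℓ) ν σ ∧ ¬ AllHooksHorizontal ℓ σ := by
  intro k
  induction k with
  | zero =>
    intro ν hR hR1 hR2
    have : ν.rowLen (R + 1 + 1) ≤ B := hR2
    refine ⟨ν, .refl, fun h => ?_⟩
    have := h R (R + 1) (A + 1) ⟨by omega, by omega, by omega, by rw [hR]; omega⟩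
    omega
  | succ k ih =>
    intro ν hR hR1 hR2
    obtain ⟨ν', hrem, hR', hother⟩ := exists_removeHorizHook hℓ (i := R) (lam := ν) (by
      rw [hR, hR1, Nat.mul_succ]
      have := Nat.le_mul_of_pos_right ℓ (show 0 < k + 1 by omega)
      omega)
    obtain ⟨σ, hσ, hnot⟩ := ih ν' (by rw [Nat.mul_succ ℓ (k + 1)] at hR; omega)
      (by rw [hother _ (by omega), hR1]) (by rw [hother _ (by omega)]; exact hR2)
    exact ⟨σ, .head hrem hσ, hnot⟩

namespace Decomp

variable {ℓ r : ℕ} {μ lam ν : YoungDiagram} {κ : ℕ → ℕ}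

theorem of_addRow (hd : Decomp ℓ μ r κ ν) (hℓ : 0 < ℓ) {i : ℕ} (hir : i ≤ r)
    (hνi : ν.rowLen i + ℓ = lam.rowLen i) (hνj : ∀ j ≠ i, ν.rowLen j = lam.rowLen j) :
    Decomp ℓ μ r (Function.update κ i (κ i + 1)) lam := by
  have hprev : ∀ j < i, κ i + 1 ≤ κ j := by
    intro j hji
    obtain ⟨i, rfl⟩ : ∃ i', i = i' + 1 := ⟨i - 1, by omega⟩
    have := hd.rowLen_of_lt (j := i) (by omega)
    have := lam.rowLen_anti i (i + 1) (by omega)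
    have := hνj i (by omega)
    have := hd.antitone (show j ≤ i by omega)
    by_contra h
    have := Nat.mul_le_mul_left ℓ (show κ i ≤ κ (i + 1) by omega)
    omega
  refine ⟨hd.isCore, hd.top_sub_ne, hd.antitone.update_nat hprev
      (fun j hj => (hd.antitone hj.le).trans (Nat.le_succ _)),
    fun j hj => ?_, fun j hjr => ?_, fun j hj => ?_⟩
  · rw [Function.update_of_ne (by omega), hd.kappa_eq_zero (by omega)]
  · rcases eq_or_ne j i with rfl | hji
    · have := hd.rowLen_of_le hjr
      rw [Function.update_self, Nat.mul_succ]
      omega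
    · rw [Function.update_of_ne hji, ← hνj j hji]
      exact hd.rowLen_of_le hjr
  · rw [← hνj _ (by omega)]
    exact hd.rowLen_add hj

theorem exists_of_addRow (hd : Decomp ℓ μ r κ ν) (hℓ : 0 < ℓ) {i : ℕ}
    (hi : ν.rowLen i + ℓ = lam.rowLen i) (hj : ∀ j ≠ i, ν.rowLen j = lam.rowLen j)
    (hlam : ∀ σ, Relation.ReflTransGen (RemoveHorizHook ℓ) lam σ → AllHooksHorizontal ℓ σ) :
    ∃ κ', Decomp ℓ μ r κ' lam := by
  rcases lt_trichotomy i (r + 1) with hir | rfl | hir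
  · exact ⟨_, hd.of_addRow hℓ (by omega) hi hj⟩
  · have := hd.rowLen_self
    have := hd.rowLen_succ_self
    have := hd.rowLen_of_gt (i := r + 2) (by omega)
    have := hd.top_lt hℓ
    have := μ.rowLen_anti 0 1 zero_le_one
    have := μ.rowLen_anti 1 (r + 2 - r) (by omega)
    have := lam.rowLen_anti r (r + 1) (by omega)
    have := hj r (by omega)
    obtain ⟨k, hk⟩ : ∃ k, κ r = k + 1 := Nat.exists_eq_succ_of_ne_zero fun h => by
      simp only [h, mul_zero] at *
      omega
    obtain ⟨σ, hσ, hnot⟩ := exists_reflTransGen_not_allHooksHorizontal hℓ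
      (A := μ.rowLen 0) (B := μ.rowLen 1) (R := r) (by omega) (by omega) k lam
      (by rw [← hj r (by omega), ← hk]; omega) (by omega)
      (by rw [← hj _ (by omega)]; omega)
    exact absurd (hlam σ hσ) hnot
  · have := hd.rowLen_of_gt (i := i - 1) (by omega)
    have := hd.rowLen_of_gt (i := i) (by omega)
    have := hd.isCore.rowLen_lt hℓ (i - 1 - r)
    have := lam.rowLen_anti (i - 1) i (by omega)
    have := hj (i - 1) (by omega)
    rw [show i - 1 - r + 1 = i - r by omega] at *
    omega

end Decomp

theorem exists_decomp {ℓ : ℕ} (hℓ : 2 ≤ ℓ) (lam : YoungDiagram)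
    (h : ∀ ν, Relation.ReflTransGen (RemoveHorizHook ℓ) lam ν → AllHooksHorizontal ℓ ν) :
    ∃ μ r κ, Decomp ℓ μ r κ lam := by
  induction hn : lam.cells.card using Nat.strong_induction_on generalizing lam with
  | _ n ih =>
  by_cases hhook : ∃ a c m, HookAt lam a c m ℓ
  · obtain ⟨a, c, m, hh⟩ := hhook
    obtain rfl := h lam .refl a c m hh
    obtain ⟨ν, hrem, hi, hj⟩ := exists_removeHorizHook (ℓ := ℓ) (i := a) (lam := lam) (by omega) (by
      obtain ⟨-, h1, -, h2⟩ := hh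
      omega)
    obtain ⟨μ, r, κ, hd⟩ := ih _ (hn ▸ hrem.card_lt (by omega : 0 < ℓ)) ν
      (fun σ hσ => h σ (.head hrem hσ)) rfl
    obtain ⟨κ', hd'⟩ := hd.exists_of_addRow (by omega) hi hj h
    exact ⟨μ, r, κ', hd'⟩
  · push Not at hhook
    obtain ⟨μ, r, hd⟩ := exists_decomp_of_isCore hℓ (isCore_of_forall_not_hookAt hhook)
    exact ⟨μ, r, 0, hd⟩

/-- Every `ℓ`-partition corresponds to a unique triple `(μ, r, κ)` as above, and
conversely every such triple yields an `ℓ`-partition. -/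
theorem stmt_10 (ℓ : ℕ) (hℓ : 2 ≤ ℓ) (lam : YoungDiagram) :
    IsEllPartition ℓ lam ↔
      ∃! t : YoungDiagram × ℕ × (ℕ → ℕ), Decomp ℓ t.1 t.2.1 t.2.2 lam := by
  constructor
  · intro h
    obtain ⟨μ, r, κ, hd⟩ := exists_decomp hℓ lam ((isEllPartition_iff hℓ).mp h)
    refine ⟨(μ, r, κ), hd, fun ⟨μ', r', κ'⟩ hd' => ?_⟩
    obtain ⟨rfl, rfl, rfl⟩ := Decomp.unique hd' hd (by omega)
    rfl
  · rintro ⟨⟨μ, r, κ⟩, hd, -⟩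
    exact hd.isEllPartition hℓ
end

section
/- Suppose λ is not an (ℓ,0)-JM partition with ℓ > 2. Then there exist boxes (c,d), (c,w), (z,d) in the Young diagram of λ with c < z and d < w such that ℓ divides h_{(c,d)} but ℓ divides neither h_{(c,w)} nor h_{(z,d)}. -/
/-- `lam` is an `(ℓ,0)`-JM partition: there do not exist boxes `(a,b)`, `(a,y)`,
`(x,b)` of `lam` with `ℓ ∣ h_{(a,b)}` while `ℓ ∤ h_{(a,y)}` and `ℓ ∤ h_{(x,b)}`. -/
def IsJM (ℓ : ℕ) (lam : YoungDiagram) : Prop :=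
  ¬ ∃ a b x y : ℕ, (a, b) ∈ lam ∧ (a, y) ∈ lam ∧ (x, b) ∈ lam ∧
    ℓ ∣ hookLen lam a b ∧ ¬ ℓ ∣ hookLen lam a y ∧ ¬ ℓ ∣ hookLen lam x b

open Pointwise

theorem Int.not_dvd_of_pos_of_lt {ℓ k : ℤ} (h₀ : 0 < k) (h₁ : k < ℓ) : ¬ ℓ ∣ k :=
  fun h => h₀.ne' (Int.eq_zero_of_dvd_of_nonneg_of_lt h₀.le h₁ h)

theorem Int.not_dvd_of_dvd_of_sub_pos_of_sub_lt {ℓ a x : ℤ} (ha : ℓ ∣ a) (h₀ : 0 < a - x)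
    (h₁ : a - x < ℓ) : ¬ ℓ ∣ x :=
  fun hx => Int.not_dvd_of_pos_of_lt h₀ h₁ (dvd_sub ha hx)

theorem Int.exists_dvd_sub_of_not_dvd {ℓ a : ℤ} (hℓ : 0 < ℓ) (h : ¬ ℓ ∣ a) :
    ∃ r, 0 < r ∧ r < ℓ ∧ ℓ ∣ a - r :=
  ⟨a % ℓ, (Int.emod_pos_of_not_dvd h).resolve_left hℓ.ne', Int.emod_lt_of_pos a hℓ,
    Int.dvd_self_sub_emod⟩

section MayaDiagram

variable {S : Set ℤ} {ℓ : ℤ}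

/-- For the beads `S` of a partition, `b - c`, `b - c₁` and `b₁ - c` are the hook lengths of a
box, of a box to its right and of a box below it. -/
def HasNestedBadHook (S : Set ℤ) (ℓ : ℤ) : Prop :=
  ∃ b c c₁ b₁, b ∈ S ∧ c ∉ S ∧ c₁ ∉ S ∧ b₁ ∈ S ∧ c < c₁ ∧ c₁ < b ∧ c < b₁ ∧ b₁ < b ∧
    ℓ ∣ b - c ∧ ¬ ℓ ∣ b - c₁ ∧ ¬ ℓ ∣ b₁ - c

theorem HasNestedBadHook.of_neg_compl (h : HasNestedBadHook (-S)ᶜ ℓ) : HasNestedBadHook S ℓ := by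
  obtain ⟨b, c, c₁, b₁, hb, hc, hc₁, hb₁, h₁, h₂, h₃, h₄, hd, hd₁, hd₂⟩ := h
  simp only [Set.mem_compl_iff, Set.mem_neg, not_not] at hb hc hc₁ hb₁
  refine ⟨-c, -b, -b₁, -c₁, hc, hb, hb₁, hc₁, by omega, by omega, by omega, by omega, ?_, ?_, ?_⟩
    <;> rwa [neg_sub_neg]

theorem hasNestedBadHook_of_forall_dvd {b c b₁ : ℤ} (hℓ : 2 < ℓ) (hb : b ∈ S) (hb₁ : b₁ ∈ S)
    (hcb : c < b) (hcb₁ : c < b₁) (hdvd : ℓ ∣ b - c) (hndvd : ¬ ℓ ∣ b₁ - c)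
    (hleg : ∀ t ∈ S, c < t → t < b → ℓ ∣ t - c) : HasNestedBadHook S ℓ := by
  have hbc : c + ℓ ≤ b := by linarith [Int.le_of_dvd (sub_pos.2 hcb) hdvd]
  have gap : ∀ t, c < t → t < c + ℓ → t ∉ S := fun t h₁ h₂ ht =>
    Int.not_dvd_of_pos_of_lt (by omega) (by omega) (hleg t ht h₁ (by omega))
  have hbb₁ : b < b₁ := lt_of_not_ge fun h =>
    hndvd (h.lt_or_eq.elim (hleg b₁ hb₁ hcb₁) (· ▸ hdvd))
  obtain ⟨r, hr₀, hrℓ, hr⟩ := Int.exists_dvd_sub_of_not_dvd (by omega) hndvd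
  rw [sub_sub] at hr
  have hb₁cr : c + r + ℓ ≤ b₁ := by linarith [Int.le_of_dvd (by omega) hr]
  have hbcr : ¬ ℓ ∣ b - (c + r) :=
    Int.not_dvd_of_dvd_of_sub_pos_of_sub_lt hdvd (by omega) (by omega)
  obtain rfl | hr₁ := eq_or_ne r 1
  · refine ⟨b₁, c + 1, c + 2, b, hb₁, gap _ (by omega) (by omega), gap _ (by omega) (by omega),
      hb, ?_, ?_, ?_, ?_, hr, Int.not_dvd_of_dvd_of_sub_pos_of_sub_lt hr (by omega) (by omega),
      hbcr⟩ <;> omega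
  by_cases hb₁S : b₁ - 1 ∈ S
  · have hr' : ℓ ∣ b₁ - 1 - (c + r - 1) := by rwa [show b₁ - 1 - (c + r - 1) = b₁ - (c + r) by ring]
    have hbcr' : ¬ ℓ ∣ b - (c + r - 1) :=
      Int.not_dvd_of_dvd_of_sub_pos_of_sub_lt hdvd (by omega) (by omega)
    have hbb₁' : b ≠ b₁ - 1 := by rintro rfl; exact hbcr' hr'
    refine ⟨b₁ - 1, c + r - 1, c + r, b, hb₁S, gap _ (by omega) (by omega),
      gap _ (by omega) (by omega), hb, ?_, ?_, ?_, ?_, hr',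
      Int.not_dvd_of_dvd_of_sub_pos_of_sub_lt hr (by omega) (by omega), hbcr'⟩ <;> omega
  · refine ⟨b₁, c + r, b₁ - 1, b, hb₁, gap _ (by omega) (by omega), hb₁S, hb, ?_, ?_, ?_, ?_, hr,
      Int.not_dvd_of_dvd_of_sub_pos_of_sub_lt (dvd_refl ℓ) (by omega) (by omega), hbcr⟩ <;> omega

theorem hasNestedBadHook {b c c₁ b₁ : ℤ} (hℓ : 2 < ℓ) (hb : b ∈ S) (hc : c ∉ S) (hb₁ : b₁ ∈ S)
    (hc₁ : c₁ ∉ S) (hcb : c < b) (hc₁b : c₁ < b) (hcb₁ : c < b₁) (hdvd : ℓ ∣ b - c)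
    (hd₁ : ¬ ℓ ∣ b - c₁) (hd₂ : ¬ ℓ ∣ b₁ - c) : HasNestedBadHook S ℓ := by
  by_cases harm : ∃ t ∉ S, c < t ∧ t < b ∧ ¬ ℓ ∣ b - t
  · by_cases hleg : ∃ t ∈ S, c < t ∧ t < b ∧ ¬ ℓ ∣ t - c
    · obtain ⟨t₁, ht₁, hct₁, ht₁b, hdt₁⟩ := harm
      obtain ⟨t₂, ht₂, hct₂, ht₂b, hdt₂⟩ := hleg
      exact ⟨b, c, t₁, t₂, hb, hc, ht₁, ht₂, hct₁, ht₁b, hct₂, ht₂b, hdvd, hdt₁, hdt₂⟩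
    · push Not at hleg
      exact hasNestedBadHook_of_forall_dvd hℓ hb hb₁ hcb hcb₁ hdvd hd₂ hleg
  · push Not at harm
    refine HasNestedBadHook.of_neg_compl <| hasNestedBadHook_of_forall_dvd (b := -c) (c := -b)
      (b₁ := -c₁) hℓ (by simpa using hc) (by simpa using hc₁) (by omega) (by omega)
      (by rwa [neg_sub_neg]) (by rwa [neg_sub_neg]) fun t ht h₁ h₂ => ?_
    have := harm (-t) (by simpa using ht) (by omega) (by omega)
    rwa [sub_neg_eq_add, add_comm, ← sub_neg_eq_add] at this

end MayaDiagram

namespace YoungDiagram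

variable (μ : YoungDiagram)

def rowBead (x : ℕ) : ℤ := μ.rowLen x - x - 1

def colGap (w : ℕ) : ℤ := w - μ.colLen w

theorem rowBead_strictAnti : StrictAnti μ.rowBead := fun x y h => by
  have := μ.rowLen_anti x y h.le
  unfold rowBead
  omega

theorem colGap_strictMono : StrictMono μ.colGap := fun w v h => by
  have := μ.colLen_anti w v h.le
  unfold colGap
  omega

variable {μ}

theorem mem_iff_colGap_lt_rowBead {x w : ℕ} : (x, w) ∈ μ ↔ μ.colGap w < μ.rowBead x := by
  rw [rowBead, colGap]
  constructor
  · intro h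
    have := mem_iff_lt_rowLen.1 h
    have := mem_iff_lt_colLen.1 h
    omega
  · intro h
    by_contra h'
    have := mem_iff_lt_rowLen.not.1 h'
    have := mem_iff_lt_colLen.not.1 h'
    omega

theorem dvd_hookLen_iff {ℓ x w : ℕ} (h : (x, w) ∈ μ) :
    ℓ ∣ hookLen μ x w ↔ (ℓ : ℤ) ∣ μ.rowBead x - μ.colGap w := by
  have := mem_iff_lt_rowLen.1 h
  have := mem_iff_lt_colLen.1 h
  rw [← Int.natCast_dvd_natCast, hookLen, rowBead, colGap]
  congr! 1
  omega

theorem mem_range_colGap_iff {t : ℤ} : t ∈ Set.range μ.colGap ↔ t ∉ Set.range μ.rowBead := by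
  constructor
  · rintro ⟨w, rfl⟩ ⟨x, hx⟩
    have := mem_iff_lt_rowLen.not.1 (mem_iff_colGap_lt_rowBead.not.2 hx.not_gt)
    have := mem_iff_lt_colLen.not.1 (mem_iff_colGap_lt_rowBead.not.2 hx.not_gt)
    rw [rowBead, colGap] at hx
    omega
  · intro ht
    have hex : ∃ x, μ.rowBead x < t := ⟨(μ.rowLen 0 - t).toNat, by
      have := μ.rowLen_anti 0 (μ.rowLen 0 - t).toNat (Nat.zero_le _)
      unfold rowBead
      omega⟩
    -- `x` is the first row whose bead lies left of `t`; column `x + t` then has its gap at `t`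
    set x := Nat.find hex
    have hx : μ.rowBead x < t := Nat.find_spec hex
    have hprev : ∀ y < x, t < μ.rowBead y := fun y hy =>
      lt_of_le_of_ne (not_lt.1 (Nat.find_min hex hy)) fun h => ht ⟨y, h.symm⟩
    rw [rowBead] at hx
    have hlen : μ.colLen (x + t).toNat = x := by
      apply le_antisymm
      · by_contra! hlt
        have := mem_iff_lt_rowLen.1 (mem_iff_lt_colLen.2 hlt)
        omega
      · rcases Nat.eq_zero_or_pos x with h0 | hpos
        · omega
        have := hprev (x - 1) (by omega)
        rw [rowBead] at this
        have hmem : (x - 1, (x + t).toNat) ∈ μ := mem_iff_lt_rowLen.2 (by omega)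
        have := mem_iff_lt_colLen.1 hmem
        omega
    exact ⟨(x + t).toNat, by rw [colGap, hlen]; omega⟩

theorem exists_nested_of_hasNestedBadHook {ℓ : ℕ} (h : HasNestedBadHook (Set.range μ.rowBead) ℓ) :
    ∃ c d w z : ℕ, (c, d) ∈ μ ∧ (c, w) ∈ μ ∧ (z, d) ∈ μ ∧ c < z ∧ d < w ∧
      ℓ ∣ hookLen μ c d ∧ ¬ ℓ ∣ hookLen μ c w ∧ ¬ ℓ ∣ hookLen μ z d := by
  obtain ⟨_, _, _, _, ⟨c, rfl⟩, hd, hw, ⟨z, rfl⟩, hdw, hwc, hdz, hzc, hcd, hcw, hzd⟩ := h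
  obtain ⟨d, rfl⟩ := mem_range_colGap_iff.2 hd
  obtain ⟨w, rfl⟩ := mem_range_colGap_iff.2 hw
  have mcd : (c, d) ∈ μ := mem_iff_colGap_lt_rowBead.2 (hdw.trans hwc)
  have mcw : (c, w) ∈ μ := mem_iff_colGap_lt_rowBead.2 hwc
  have mzd : (z, d) ∈ μ := mem_iff_colGap_lt_rowBead.2 hdz
  exact ⟨c, d, w, z, mcd, mcw, mzd, μ.rowBead_strictAnti.lt_iff_gt.1 hzc,
    μ.colGap_strictMono.lt_iff_lt.1 hdw, (dvd_hookLen_iff mcd).2 hcd,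
    mt (dvd_hookLen_iff mcw).1 hcw, mt (dvd_hookLen_iff mzd).1 hzd⟩

end YoungDiagram

open YoungDiagram in
/-- If `lam` is not an `(ℓ,0)`-JM partition (with `ℓ > 2`), then there exist boxes
`(c,d)`, `(c,w)`, `(z,d)` of `lam` with `c < z` and `d < w` such that `ℓ` divides
`h_{(c,d)}` but divides neither `h_{(c,w)}` nor `h_{(z,d)}`. -/
theorem stmt_14 (ℓ : ℕ) (hℓ : 2 < ℓ) (lam : YoungDiagram) (h : ¬ IsJM ℓ lam) :
    ∃ c d w z : ℕ, (c, d) ∈ lam ∧ (c, w) ∈ lam ∧ (z, d) ∈ lam ∧ c < z ∧ d < w ∧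
      ℓ ∣ hookLen lam c d ∧ ¬ ℓ ∣ hookLen lam c w ∧ ¬ ℓ ∣ hookLen lam z d := by
  obtain ⟨a, b, x, y, hab, hay, hxb, hd, hdy, hdx⟩ := not_not.1 h
  exact exists_nested_of_hasNestedBadHook <| hasNestedBadHook (by exact_mod_cast hℓ)
    ⟨a, rfl⟩ (mem_range_colGap_iff.1 ⟨b, rfl⟩) ⟨x, rfl⟩ (mem_range_colGap_iff.1 ⟨y, rfl⟩)
    (mem_iff_colGap_lt_rowBead.1 hab) (mem_iff_colGap_lt_rowBead.1 hay)
    (mem_iff_colGap_lt_rowBead.1 hxb) ((dvd_hookLen_iff hab).1 hd)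
    (mt (dvd_hookLen_iff hay).2 hdy) (mt (dvd_hookLen_iff hxb).2 hdx)
end

section
/- If λ is an ℓ-regular partition in the crystal B(Λ_0), then there is no i-ladder of λ containing an addable i-box strictly above a removable i-box; more precisely, there do not exist positions (a,b) and (c,d) with (c-a)/(d-b) = ℓ-1, a < c, such that (a,b) is an addable box of λ and (c,d) is a removable box of λ. -/
/-- The residue of the position in row `a`, column `b` (0-indexed): `(b - a) mod ℓ`. -/
def resBox (ℓ : ℕ) (a b : ℕ) : ZMod ℓ := (b : ZMod ℓ) - (a : ZMod ℓ)

/-- `(a,b)` is a removable box of `lam`: it is a box of `lam` whose removal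
leaves a Young diagram. -/
def IsRemovableBox (lam : YoungDiagram) (a b : ℕ) : Prop :=
  (a, b) ∈ lam ∧ (a, b + 1) ∉ lam ∧ (a + 1, b) ∉ lam

/-- `(a,b)` is an addable box of `lam`: it is not a box of `lam` and adding it
yields a Young diagram. -/
def IsAddableBox (lam : YoungDiagram) (a b : ℕ) : Prop :=
  (a, b) ∉ lam ∧ (b = 0 ∨ (a, b - 1) ∈ lam) ∧ (a = 0 ∨ (a - 1, b) ∈ lam)

/-!
An addable box `(a, b)` ends row `a`, so `λ_a = b`, and a removable box `(c, d)` ends row `c`,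
so `λ_c = d + 1`. Regularity makes the parts strictly decrease every `ℓ - 1` rows as long as
they are nonzero, so going down `(ℓ - 1)(b - d)` rows from row `a` to row `c` loses at least
`b - d` from the part, giving `d + 1 = λ_c ≤ b - (b - d) = d`.
-/

open YoungDiagram

theorem IsAddableBox.rowLen_eq {lam : YoungDiagram} {a b : ℕ} (h : IsAddableBox lam a b) :
    lam.rowLen a = b := by
  obtain ⟨hab, hleft, -⟩ := h
  have hle : lam.rowLen a ≤ b := not_lt.mp fun hlt => hab (mem_iff_lt_rowLen.mpr hlt)
  rcases hleft with rfl | hprev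
  · omega
  · have := mem_iff_lt_rowLen.mp hprev
    omega

theorem IsRemovableBox.rowLen_eq {lam : YoungDiagram} {a b : ℕ} (h : IsRemovableBox lam a b) :
    lam.rowLen a = b + 1 := by
  obtain ⟨hab, hright, -⟩ := h
  have hlt := mem_iff_lt_rowLen.mp hab
  have hle : lam.rowLen a ≤ b + 1 := not_lt.mp fun hlt => hright (mem_iff_lt_rowLen.mpr hlt)
  omega

section Regular

variable {ℓ : ℕ} {lam : YoungDiagram}

theorem Regular.rowLen_add_lt (hreg : Regular ℓ lam) (hℓ : 1 ≤ ℓ) {i : ℕ}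
    (hpos : 0 < lam.rowLen (i + (ℓ - 1))) : lam.rowLen (i + (ℓ - 1)) < lam.rowLen i := by
  have hle : lam.rowLen (i + (ℓ - 1)) ≤ lam.rowLen i := lam.rowLen_anti _ _ (by omega)
  have hne : lam.rowLen i ≠ lam.rowLen (i + (ℓ - 1)) := fun heq => by
    have := hreg i (by rwa [Nat.add_sub_assoc hℓ])
    omega
  omega

theorem Regular.rowLen_add_mul_add_le (hreg : Regular ℓ lam) (hℓ : 1 ≤ ℓ) (i : ℕ) :
    ∀ m : ℕ, 0 < lam.rowLen (i + (ℓ - 1) * m) →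
      lam.rowLen (i + (ℓ - 1) * m) + m ≤ lam.rowLen i
  | 0, _ => by simp
  | m + 1, hpos => by
    have hstep : i + (ℓ - 1) * (m + 1) = i + (ℓ - 1) * m + (ℓ - 1) := by ring
    rw [hstep] at hpos ⊢
    have hlt := hreg.rowLen_add_lt hℓ hpos
    have ih := hreg.rowLen_add_mul_add_le hℓ i m (by omega)
    omega

end Regular

/-- If `lam` is an `ℓ`-regular partition (a node of the crystal `B(Λ₀)`), then no
`i`-ladder of `lam` contains an addable box strictly above a removable box: there do
not exist positions `(a,b)` and `(c,d)` on the same ladder (i.e. with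
`c - a = (ℓ-1)(b - d)`) with `a < c` such that `(a,b)` is addable and `(c,d)` is
removable. -/
theorem stmt_16 (ℓ : ℕ) (hℓ : 2 ≤ ℓ) (lam : YoungDiagram) (hreg : Regular ℓ lam) :
    ¬ ∃ a b c d : ℕ, a < c ∧ (c : ℤ) - (a : ℤ) = ((ℓ : ℤ) - 1) * ((b : ℤ) - (d : ℤ)) ∧
      IsAddableBox lam a b ∧ IsRemovableBox lam c d := by
  rintro ⟨a, b, c, d, hac, hladder, hadd, hrem⟩
  have hdb : d < b := by
    by_contra! hbd
    have : ((ℓ : ℤ) - 1) * ((b : ℤ) - d) ≤ 0 :=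
      mul_nonpos_of_nonneg_of_nonpos (by omega) (by omega)
    omega
  have hc : c = a + (ℓ - 1) * (b - d) := by
    zify [hdb.le, (by omega : 1 ≤ ℓ)]
    linarith
  have hdrop := hreg.rowLen_add_mul_add_le (by omega) a (b - d)
  rw [← hc, hrem.rowLen_eq, hadd.rowLen_eq] at hdrop
  omega
end

section
/- Let λ be an ℓ-core, viewed via its balanced flush abacus with n-vector (b_0, ..., b_{ℓ-1}) ∈ Z^ℓ summing to 0. Then the largest part of λ equals ∑_{j<i} (a_i − a_j) + ∑_{j>i} (a_i − a_j − 1), where (a_1,...,a_ℓ) = (b_0,...,b_{ℓ-1}) and a_i is the rightmost occurrence of the largest coordinate; equivalently λ_1 = (a_i − 1)ℓ + i. -/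
/-- In the flush abacus with `ℓ` runners determined by the vector `a` (indexed
`1, ..., ℓ`), the integer entry `q` (at level `q / ℓ` on runner `q % ℓ`) is a bead:
runner `j - 1` carries beads at all levels `≤ a j`. -/
def IsBead (ℓ : ℕ) (a : ℕ → ℤ) (q : ℤ) : Prop :=
  q / (ℓ : ℤ) ≤ a ((q % (ℓ : ℤ)).toNat + 1)

private lemma key_ineq (ℓ i j : ℕ) (hℓ : 1 ≤ ℓ) (hi1 : 1 ≤ i) (hi2 : i ≤ ℓ)
    (hj1 : 1 ≤ j) (hj2 : j ≤ ℓ) (r c : ℤ) :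
    r * ℓ + (j : ℤ) - 1 < c * ℓ + (i : ℤ) - 1 ↔ r ≤ (if j < i then c else c - 1) := by
  have hL : (1 : ℤ) ≤ (ℓ : ℤ) := by exact_mod_cast hℓ
  have hjL : (j : ℤ) ≤ (ℓ : ℤ) := by exact_mod_cast hj2
  have hiL : (i : ℤ) ≤ (ℓ : ℤ) := by exact_mod_cast hi2
  have hj1' : (1 : ℤ) ≤ (j : ℤ) := by exact_mod_cast hj1
  have hi1' : (1 : ℤ) ≤ (i : ℤ) := by exact_mod_cast hi1
  split_ifs with h
  · have hij : (j : ℤ) < (i : ℤ) := by exact_mod_cast h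
    constructor
    · intro hlt
      by_contra hc
      push_neg at hc
      have : c + 1 ≤ r := hc
      nlinarith [mul_le_mul_of_nonneg_right this (le_trans zero_le_one hL)]
    · intro hr
      nlinarith [mul_le_mul_of_nonneg_right hr (le_trans zero_le_one hL)]
  · have hij : (i : ℤ) ≤ (j : ℤ) := by
      have := le_of_not_gt h
      exact_mod_cast this
    constructor
    · intro hlt
      by_contra hc
      push_neg at hc
      have : c ≤ r := by linarith
      nlinarith [mul_le_mul_of_nonneg_right this (le_trans zero_le_one hL)]
    · intro hr
      nlinarith [mul_le_mul_of_nonneg_right hr (le_trans zero_le_one hL)]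

/-- Let `λ = π(a₁, ..., a_ℓ)` be the `ℓ`-core of the balanced flush abacus of a
vector `a` in the root lattice, and let `a i` be the rightmost occurrence of the
largest coordinate.  The largest part of `λ` — the number of gaps preceding the
largest bead (which sits at position `a i * ℓ + i - 1`) in reading order — equals
`∑_{j<i} (a i - a j) + ∑_{j>i} (a i - a j - 1)`, and equivalently equals
`(a i - 1) ℓ + i`. -/
theorem stmt_17 (ℓ i : ℕ) (hℓ : 2 ≤ ℓ) (a : ℕ → ℤ)
    (hsum : ∑ j ∈ Finset.Icc 1 ℓ, a j = 0)
    (hi1 : 1 ≤ i) (hi2 : i ≤ ℓ)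
    (hmax : ∀ j ∈ Finset.Icc 1 ℓ, a j ≤ a i)
    (hright : ∀ j ∈ Finset.Icc 1 ℓ, i < j → a j < a i) :
    (({q : ℤ | ¬ IsBead ℓ a q ∧ q < a i * (ℓ : ℤ) + (i : ℤ) - 1}.ncard : ℤ) =
        ∑ j ∈ Finset.Icc 1 ℓ,
          (if j < i then a i - a j else if i < j then a i - a j - 1 else 0)) ∧
      (({q : ℤ | ¬ IsBead ℓ a q ∧ q < a i * (ℓ : ℤ) + (i : ℤ) - 1}.ncard : ℤ) =
        (a i - 1) * (ℓ : ℤ) + (i : ℤ)) := by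
  have hℓ0 : (0 : ℤ) < (ℓ : ℤ) := by exact_mod_cast Nat.lt_of_lt_of_le Nat.zero_lt_two hℓ
  have hℓ1 : 1 ≤ ℓ := le_trans one_le_two hℓ
  set bnd : ℕ → ℤ := fun j => if j < i then a i else a i - 1 with hbnd
  set T : Finset ℤ := (Finset.Icc 1 ℓ).biUnion
    (fun j => (Finset.Ioc (a j) (bnd j)).image (fun r => r * (ℓ : ℤ) + (j : ℤ) - 1)) with hT
  -- membership characterization
  have hmem : ∀ q : ℤ, (¬ IsBead ℓ a q ∧ q < a i * (ℓ : ℤ) + (i : ℤ) - 1) ↔ q ∈ T := by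
    intro q
    constructor
    · rintro ⟨hnb, hlt⟩
      set m := q % (ℓ : ℤ) with hm
      set r := q / (ℓ : ℤ) with hr
      have hm0 : 0 ≤ m := Int.emod_nonneg q (ne_of_gt hℓ0)
      have hmL : m < (ℓ : ℤ) := Int.emod_lt_of_pos q hℓ0
      set j : ℕ := m.toNat + 1 with hj
      have hjm : (j : ℤ) - 1 = m := by omega
      have hj1 : 1 ≤ j := by omega
      have hj2 : j ≤ ℓ := by omega
      have hq : q = r * (ℓ : ℤ) + (j : ℤ) - 1 := by
        have h := Int.mul_ediv_add_emod q (ℓ : ℤ)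
        rw [← hm, ← hr] at h
        linarith [hjm, mul_comm (ℓ : ℤ) r]
      unfold IsBead at hnb
      push_neg at hnb
      rw [← hm, ← hr, ← hj] at hnb
      rw [Finset.mem_biUnion]
      refine ⟨j, Finset.mem_Icc.mpr ⟨hj1, hj2⟩, ?_⟩
      rw [Finset.mem_image]
      refine ⟨r, Finset.mem_Ioc.mpr ⟨hnb, ?_⟩, by linarith [hq]⟩
      have := (key_ineq ℓ i j hℓ1 hi1 hi2 hj1 hj2 r (a i)).mp (by rw [hq] at hlt; linarith)
      simpa [hbnd] using this
    · intro hq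
      rw [Finset.mem_biUnion] at hq
      obtain ⟨j, hjmem, hq⟩ := hq
      rw [Finset.mem_image] at hq
      obtain ⟨r, hrmem, hq⟩ := hq
      obtain ⟨hj1, hj2⟩ := Finset.mem_Icc.mp hjmem
      obtain ⟨hr1, hr2⟩ := Finset.mem_Ioc.mp hrmem
      have hjm0 : (0 : ℤ) ≤ (j : ℤ) - 1 := by omega
      have hjmL : (j : ℤ) - 1 < (ℓ : ℤ) := by omega
      have hq' : q = ((j : ℤ) - 1) + r * (ℓ : ℤ) := by linarith [hq]
      have hmod : q % (ℓ : ℤ) = (j : ℤ) - 1 := by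
        rw [hq', Int.add_mul_emod_self_right]
        exact Int.emod_eq_of_lt hjm0 hjmL
      have hdiv : q / (ℓ : ℤ) = r := by
        rw [hq', Int.add_mul_ediv_right _ _ (ne_of_gt hℓ0),
          Int.ediv_eq_zero_of_lt hjm0 hjmL, zero_add]
      constructor
      · unfold IsBead
        rw [hmod, hdiv]
        have : ((j : ℤ) - 1).toNat + 1 = j := by omega
        rw [this]
        exact not_le.mpr hr1
      · rw [← hq]
        exact (key_ineq ℓ i j hℓ1 hi1 hi2 hj1 hj2 r (a i)).mpr (by simpa [hbnd] using hr2)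
  have hset : {q : ℤ | ¬ IsBead ℓ a q ∧ q < a i * (ℓ : ℤ) + (i : ℤ) - 1} = ↑T := by
    ext q; simpa using hmem q
  -- cardinality of T
  have hinj : ∀ j : ℕ, Function.Injective (fun r : ℤ => r * (ℓ : ℤ) + (j : ℤ) - 1) := by
    intro j r r' h
    simp only at h
    have : r * (ℓ : ℤ) = r' * (ℓ : ℤ) := by linarith
    exact mul_right_cancel₀ (ne_of_gt hℓ0) this
  have hdisj : ∀ x ∈ Finset.Icc 1 ℓ, ∀ y ∈ Finset.Icc 1 ℓ, x ≠ y →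
      Disjoint ((Finset.Ioc (a x) (bnd x)).image (fun r => r * (ℓ : ℤ) + (x : ℤ) - 1))
        ((Finset.Ioc (a y) (bnd y)).image (fun r => r * (ℓ : ℤ) + (y : ℤ) - 1)) := by
    intro x hx y hy hxy
    rw [Finset.disjoint_left]
    intro q hqx hqy
    rw [Finset.mem_image] at hqx hqy
    obtain ⟨r, _, hrq⟩ := hqx
    obtain ⟨s, _, hsq⟩ := hqy
    obtain ⟨hx1, hx2⟩ := Finset.mem_Icc.mp hx
    obtain ⟨hy1, hy2⟩ := Finset.mem_Icc.mp hy
    have hxL : (x : ℤ) ≤ (ℓ : ℤ) := by exact_mod_cast hx2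
    have hyL : (y : ℤ) ≤ (ℓ : ℤ) := by exact_mod_cast hy2
    have hx1' : (1 : ℤ) ≤ (x : ℤ) := by exact_mod_cast hx1
    have hy1' : (1 : ℤ) ≤ (y : ℤ) := by exact_mod_cast hy1
    have heq : r * (ℓ : ℤ) + (x : ℤ) - 1 = s * (ℓ : ℤ) + (y : ℤ) - 1 := by rw [hrq, hsq]
    have hxy' : (x : ℤ) ≠ (y : ℤ) := by exact_mod_cast hxy
    have h1 : (r - s) * (ℓ : ℤ) = (y : ℤ) - (x : ℤ) := by ring_nf; linarith
    rcases lt_trichotomy r s with h | h | h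
    · have : r - s ≤ -1 := by omega
      nlinarith [mul_le_mul_of_nonneg_right this (le_of_lt hℓ0)]
    · apply hxy'; rw [h] at h1; simp at h1; linarith
    · have : 1 ≤ r - s := by omega
      nlinarith [mul_le_mul_of_nonneg_right this (le_of_lt hℓ0)]
  have hcard : T.card = ∑ j ∈ Finset.Icc 1 ℓ, (bnd j - a j).toNat := by
    rw [hT, Finset.card_biUnion hdisj]
    apply Finset.sum_congr rfl
    intro j _
    rw [Finset.card_image_of_injective _ (hinj j), Int.card_Ioc]
  -- the count as an integer
  have hncard : ({q : ℤ | ¬ IsBead ℓ a q ∧ q < a i * (ℓ : ℤ) + (i : ℤ) - 1}.ncard : ℤ) =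
      ∑ j ∈ Finset.Icc 1 ℓ,
        (if j < i then a i - a j else if i < j then a i - a j - 1 else 0) := by
    rw [hset, Set.ncard_coe_finset, hcard]
    push_cast
    apply Finset.sum_congr rfl
    intro j hj
    obtain ⟨hj1, hj2⟩ := Finset.mem_Icc.mp hj
    rcases lt_trichotomy j i with h | h | h
    · rw [if_pos h]
      simp only [hbnd, if_pos h]
      rw [Int.toNat_of_nonneg (by linarith [hmax j hj])]
    · subst h
      rw [if_neg (lt_irrefl j), if_neg (lt_irrefl j)]
      simp [hbnd]
    · rw [if_neg (not_lt_of_gt h), if_pos h]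
      simp only [hbnd, if_neg (not_lt_of_gt h)]
      rw [Int.toNat_of_nonneg (by linarith [hright j hj h])]
      ring
  refine ⟨hncard, ?_⟩
  rw [hncard]
  have hsplit : ∀ j ∈ Finset.Icc 1 ℓ,
      (if j < i then a i - a j else if i < j then a i - a j - 1 else 0) =
      (a i - a j) - (if i < j then (1 : ℤ) else 0) := by
    intro j hj
    rcases lt_trichotomy j i with h | h | h
    · rw [if_pos h, if_neg (not_lt_of_gt h)]; ring
    · subst h; simp
    · rw [if_neg (not_lt_of_gt h), if_pos h, if_pos h]
  rw [Finset.sum_congr rfl hsplit, Finset.sum_sub_distrib]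
  have h1 : ∑ j ∈ Finset.Icc 1 ℓ, (a i - a j) = (ℓ : ℤ) * a i := by
    rw [Finset.sum_sub_distrib, hsum, sub_zero, Finset.sum_const, Nat.card_Icc,
      Nat.add_sub_cancel, nsmul_eq_mul]
  have h2 : ∑ j ∈ Finset.Icc 1 ℓ, (if i < j then (1 : ℤ) else 0) = (ℓ : ℤ) - (i : ℤ) := by
    rw [← Finset.sum_filter]
    have : (Finset.Icc 1 ℓ).filter (fun j => i < j) = Finset.Ioc i ℓ := by
      ext j; simp [Finset.mem_filter, Finset.mem_Icc, Finset.mem_Ioc]; omega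
    rw [this, Finset.sum_const, Nat.card_Ioc, nsmul_eq_mul, mul_one]
    omega
  rw [h1, h2]
  ring
end

section
/- Under the bijection π from the root lattice {a ∈ Z^ℓ : ∑ a_j = 0} to ℓ-cores, the ℓ-cores λ with λ_1 = k > 0 all lie in the affine hyperplane {a : a_{(k mod ℓ)} = ⌈k/ℓ⌉} (with index taken in {1,...,ℓ}). -/
open Finset

theorem Int.sum_range_sub_ediv {ℓ : ℕ} (hℓ : 0 < ℓ) (n : ℤ) :
    ∑ r ∈ Finset.range ℓ, (n - r) / ℓ = n + 1 - ℓ := by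
  have step (n : ℤ) : ∑ r ∈ Finset.range ℓ, (n + 1 - r) / ℓ =
      ∑ r ∈ Finset.range ℓ, (n - r) / ℓ + 1 := by
    obtain ⟨m, rfl⟩ := Nat.exists_eq_add_one_of_ne_zero hℓ.ne'
    have hshift : (n + 1) / (m + 1 : ℕ) = (n - m) / (m + 1 : ℕ) + 1 := by
      rw [show n + 1 = n - m + 1 * (m + 1 : ℕ) by push_cast; ring,
        Int.add_mul_ediv_right _ _ (by positivity)]
    rw [sum_range_succ', sum_range_succ, Nat.cast_zero, sub_zero, hshift]
    push_cast
    simp only [add_sub_add_right_eq_sub]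
    ring
  induction n using Int.inductionOn' (b := ℓ - 1) with
  | zero =>
    rw [sum_eq_zero fun r hr => Int.ediv_eq_zero_of_lt (by have := mem_range.1 hr; omega)
      (by omega)]
    ring
  | succ n _ ih => rw [step, ih]; ring
  | pred n _ ih => linarith [sub_add_cancel n 1 ▸ step (n - 1)]

theorem Finset.sum_Icc_one_eq_sum_range {M : Type*} [AddCommMonoid M] (f : ℕ → M) (n : ℕ) :
    ∑ m ∈ Icc 1 n, f m = ∑ r ∈ range n, f (r + 1) := by
  rw [range_eq_Ico, sum_Ico_add' f, zero_add, Ico_add_one_right_eq_Icc]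

section Abacus

variable {ℓ : ℕ} {a : ℕ → ℤ}

theorem isBead_mul_add_iff {r : ℕ} (hr : r < ℓ) (m : ℤ) :
    IsBead ℓ a (m * ℓ + r) ↔ m ≤ a (r + 1) := by
  have hr0 : (0 : ℤ) ≤ r := r.cast_nonneg
  have hrℓ : (r : ℤ) < ℓ := by exact_mod_cast hr
  rw [IsBead, add_comm, Int.add_mul_ediv_right _ _ (by omega), Int.ediv_eq_zero_of_lt hr0 hrℓ,
    zero_add, Int.add_mul_emod_self_right, Int.emod_eq_of_lt hr0 hrℓ, Int.toNat_natCast]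

theorem eq_of_isGreatest_isBead_mul_add {r : ℕ} (hr : r < ℓ) {m : ℤ}
    (h : IsGreatest {q | IsBead ℓ a q} (m * ℓ + r)) : a (r + 1) = m := by
  have htop : a (r + 1) * ℓ + r ≤ m * ℓ + r := h.2 ((isBead_mul_add_iff hr _).2 le_rfl)
  exact le_antisymm (le_of_mul_le_mul_right (by linarith) (by omega : (0 : ℤ) < ℓ))
    ((isBead_mul_add_iff hr m).1 h.1)

theorem ncard_gaps_le (hℓ : 0 < ℓ) {n : ℤ} (hn : n ∈ upperBounds {q | IsBead ℓ a q}) :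
    ({q | ¬IsBead ℓ a q ∧ q ≤ n}.ncard : ℤ) = n + 1 - ℓ - ∑ m ∈ Icc 1 ℓ, a m := by
  have : NeZero ℓ := ⟨hℓ.ne'⟩
  have hℓ' : (0 : ℤ) < ℓ := by exact_mod_cast hℓ
  have hgaps : Int.divModEquiv ℓ '' {q | ¬IsBead ℓ a q ∧ q ≤ n} =
      ↑(univ.biUnion fun r : Fin ℓ => Ioc (a (r + 1)) ((n - r) / ℓ) ×ˢ {r}) := by
    rw [Equiv.image_eq_preimage_symm]
    ext ⟨m, r⟩
    simp only [Set.mem_preimage, Int.divModEquiv_symm_apply, Set.mem_ofPred_eq,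
      isBead_mul_add_iff r.isLt, not_le, coe_biUnion, coe_product, coe_Ioc, coe_singleton, coe_univ,
      Set.mem_univ, Set.iUnion_true, Set.mem_iUnion, Set.mem_prod, Set.mem_Ioc,
      Set.mem_singleton_iff, exists_eq_right', Int.le_ediv_iff_mul_le hℓ', le_sub_iff_add_le]
  have hdisj : ((univ : Finset (Fin ℓ)) : Set (Fin ℓ)).PairwiseDisjoint
      fun r => Ioc (a (r + 1)) ((n - r) / ℓ) ×ˢ {r} := by
    intro r _ s _ hrs
    exact disjoint_product.2 (.inr (disjoint_singleton.2 hrs))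
  have htop (r : ℕ) (hr : r < ℓ) : a (r + 1) ≤ (n - r) / ℓ :=
    (Int.le_ediv_iff_mul_le hℓ').2
      (le_sub_iff_add_le.2 (hn ((isBead_mul_add_iff hr _).2 le_rfl)))
  rw [← Set.ncard_image_of_injective _ (Int.divModEquiv ℓ).injective, hgaps,
    Set.ncard_coe_finset, card_biUnion hdisj]
  simp only [card_product, Int.card_Ioc, card_singleton, mul_one, Nat.cast_sum]
  rw [Fin.sum_univ_eq_sum_range (fun r => (((n - r) / ℓ - a (r + 1)).toNat : ℤ)),
    sum_congr rfl fun r hr => Int.toNat_of_nonneg (sub_nonneg.2 (htop r (mem_range.1 hr))),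
    sum_sub_distrib, Int.sum_range_sub_ediv hℓ, sum_Icc_one_eq_sum_range]

end Abacus

theorem stmt_18_general (ℓ k i j : ℕ) (hℓ : 2 ≤ ℓ) (a : ℕ → ℤ) (p : ℤ)
    (hsum : ∑ m ∈ Finset.Icc 1 ℓ, a m = 0)
    (hi1 : 1 ≤ i) (hi2 : i ≤ ℓ) (hj : 1 ≤ j)
    (hkij : k = (j - 1) * ℓ + i)
    (hp : IsBead ℓ a p) (hpmax : ∀ q : ℤ, IsBead ℓ a q → q ≤ p)
    (hpart : {q : ℤ | ¬ IsBead ℓ a q ∧ q < p}.ncard = k) :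
    a i = (j : ℤ) := by
  have hgaps : {q | ¬IsBead ℓ a q ∧ q < p} = {q | ¬IsBead ℓ a q ∧ q ≤ p} := by
    ext q
    exact and_congr_right fun hq => lt_iff_le_and_ne.trans
      (and_iff_left (by rintro rfl; exact hq hp))
  have hk : (k : ℤ) = p + 1 - ℓ := by
    rw [← hpart, hgaps, ncard_gaps_le (by omega) hpmax, hsum, sub_zero]
  have hp_eq : p = j * ℓ + (i - 1 : ℕ) := by
    rw [hkij] at hk
    push_cast [hj, hi1] at hk ⊢
    linarith
  rw [hp_eq] at hp hpmax
  have htop := eq_of_isGreatest_isBead_mul_add (a := a) (by omega : i - 1 < ℓ) ⟨hp, hpmax⟩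
  rwa [Nat.sub_add_cancel hi1] at htop

/-- Under the bijection `π` from the root lattice `{a ∈ ℤ^ℓ : ∑ a_j = 0}` to
`ℓ`-cores, the `ℓ`-cores `λ` with largest part `λ₁ = k > 0` all lie in the affine
hyperplane `a_{(k mod ℓ)} = ⌈k/ℓ⌉`: writing `k = (j-1)ℓ + i` with `1 ≤ i ≤ ℓ` and
`j ≥ 1`, if the number of gaps preceding the largest bead `p` in reading order
equals `k`, then `a i = j`. -/
theorem stmt_18 (ℓ k i j : ℕ) (hℓ : 2 ≤ ℓ) (a : ℕ → ℤ) (p : ℤ)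
    (hsum : ∑ m ∈ Finset.Icc 1 ℓ, a m = 0)
    (hk : 0 < k) (hi1 : 1 ≤ i) (hi2 : i ≤ ℓ) (hj : 1 ≤ j)
    (hkij : k = (j - 1) * ℓ + i)
    (hp : IsBead ℓ a p) (hpmax : ∀ q : ℤ, IsBead ℓ a q → q ≤ p)
    (hpart : {q : ℤ | ¬ IsBead ℓ a q ∧ q < p}.ncard = k) :
    a i = (j : ℤ) :=
  stmt_18_general ℓ k i j hℓ a p hsum hi1 hi2 hj hkij hp hpmax hpart
end

section
/- Let λ be an ℓ-core with canonical reduced word w(λ) in the affine symmetric group. Then the Coxeter length of w(λ) equals ∑_{i=0}^{ℓ-1} λ_{R(i)}, where R(i) is the index of the longest row of λ whose rightmost box has residue i (taking λ_{R(i)} = 0 if no row ends in residue i). -/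
/-- The residue of the rightmost box in the bottom row of a nonempty diagram `μ`. -/
def BottomRes (ℓ : ℕ) (μ : YoungDiagram) : ZMod ℓ :=
  resBox ℓ (μ.colLen 0 - 1) (μ.rowLen (μ.colLen 0 - 1) - 1)

/-- One step of the canonical reduced word: `ν` is obtained from the nonempty
diagram `μ` by removing all boxes of residue `i` lying at the end of both their row
and their column, where `i` is the residue of the rightmost box of the bottom row. -/
def CanonicalStep (ℓ : ℕ) (μ ν : YoungDiagram) : Prop :=
  μ ≠ ⊥ ∧
  ∀ p : ℕ × ℕ, p ∈ ν ↔
    (p ∈ μ ∧ ¬ (IsRemovableBox μ p.1 p.2 ∧ resBox ℓ p.1 p.2 = BottomRes ℓ μ))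

/-- The length `λ_{R(i)}` of the longest row of `lam` whose rightmost box has
residue `i` (0 if no row ends in residue `i`). -/
noncomputable def LongestRowWithRes (ℓ : ℕ) (lam : YoungDiagram) (i : ZMod ℓ) : ℕ :=
  sSup {n : ℕ | 0 < n ∧ ∃ a : ℕ, lam.rowLen a = n ∧ resBox ℓ a (n - 1) = i}

lemma ZMod.sum_range_natCast {ℓ : ℕ} [NeZero ℓ] {M : Type*} [AddCommMonoid M]
    (g : ZMod ℓ → M) : ∑ i ∈ Finset.range ℓ, g i = ∑ d, g d :=
  Finset.sum_nbij' (fun i => (i : ZMod ℓ)) ZMod.val (fun _ _ => Finset.mem_univ _)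
    (fun d _ => Finset.mem_range.2 (ZMod.val_lt d))
    (fun _ hi => ZMod.val_cast_of_lt (Finset.mem_range.1 hi))
    (fun d _ => ZMod.natCast_zmod_val d) (fun _ _ => rfl)

namespace YoungDiagram

def beta (μ : YoungDiagram) (a : ℕ) : ℤ := μ.rowLen a - a

section Beta

variable (μ : YoungDiagram)

lemma beta_succ_lt (a : ℕ) : μ.beta (a + 1) < μ.beta a := by
  have := μ.rowLen_anti a (a + 1) (Nat.le_succ a)
  unfold beta
  omega

lemma beta_strictAnti : StrictAnti μ.beta := strictAnti_nat_of_succ_lt μ.beta_succ_lt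

lemma beta_add_le (a k : ℕ) : μ.beta (a + k) ≤ μ.beta a - k := by
  induction k with
  | zero => simp
  | succ k ih =>
    have := μ.beta_succ_lt (a + k)
    rw [← add_assoc]
    push_cast
    omega

lemma rowLen_eq_zero_of_colLen_le_s19 {a : ℕ} (h : μ.colLen 0 ≤ a) : μ.rowLen a = 0 := by
  by_contra hne
  have := mem_iff_lt_colLen.1 (mem_iff_lt_rowLen.2 (Nat.pos_of_ne_zero hne))
  omega

lemma rowLen_bot (a : ℕ) : (⊥ : YoungDiagram).rowLen a = 0 :=
  Nat.eq_zero_of_not_pos fun h => notMem_bot _ (mem_iff_lt_rowLen.2 h)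

lemma beta_of_colLen_le {a : ℕ} (h : μ.colLen 0 ≤ a) : μ.beta a = -a := by
  simp [beta, μ.rowLen_eq_zero_of_colLen_le_s19 h]

lemma colLen_eq_succ {b c : ℕ} (h₁ : μ.rowLen (c + 1) ≤ b) (h₂ : b < μ.rowLen c) :
    μ.colLen b = c + 1 := by
  have hlt : c < μ.colLen b := mem_iff_lt_colLen.1 (mem_iff_lt_rowLen.2 h₂)
  have hge : ¬ c + 1 < μ.colLen b := fun h =>
    absurd (mem_iff_lt_rowLen.1 (mem_iff_lt_colLen.2 h)) (by omega)
  omega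

lemma eq_rowLen_sub_one_of_isRemovableBox {a b : ℕ} (h : IsRemovableBox μ a b) :
    b = μ.rowLen a - 1 := by
  have h₁ := mem_iff_lt_rowLen.1 h.1
  have h₂ := mt mem_iff_lt_rowLen.2 h.2.1
  omega

lemma isRemovableBox_rowLen_sub_one_iff (a : ℕ) :
    IsRemovableBox μ a (μ.rowLen a - 1) ↔ μ.beta a - 1 ∉ Set.range μ.beta := by
  have hsucc := μ.beta_succ_lt a
  have hrow : IsRemovableBox μ a (μ.rowLen a - 1) ↔ μ.beta (a + 1) < μ.beta a - 1 := by
    simp only [IsRemovableBox, mem_iff_lt_rowLen, beta]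
    omega
  rw [hrow]
  constructor
  · rintro hgap ⟨b, hb⟩
    rcases le_or_gt b a with h | h
    · have := μ.beta_strictAnti.antitone h
      omega
    · have := μ.beta_strictAnti.antitone (show a + 1 ≤ b by omega)
      omega
  · intro hgap
    exact lt_of_le_of_ne (by omega) fun h => hgap ⟨a + 1, h⟩

lemma resBox_rowLen_sub_one (ℓ : ℕ) {a : ℕ} (h : 0 < μ.rowLen a) :
    resBox ℓ a (μ.rowLen a - 1) = (μ.beta a : ZMod ℓ) - 1 := by
  simp only [resBox, beta, Nat.cast_sub (Nat.one_le_of_lt h)]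
  push_cast
  ring

open Classical in
lemma rowLen_of_removeRemovable {ℓ : ℕ} {ν : YoungDiagram} {i : ZMod ℓ}
    (hν : ∀ p : ℕ × ℕ, p ∈ ν ↔
      p ∈ μ ∧ ¬ (IsRemovableBox μ p.1 p.2 ∧ resBox ℓ p.1 p.2 = i)) (a : ℕ) :
    ν.rowLen a = if IsRemovableBox μ a (μ.rowLen a - 1) ∧ resBox ℓ a (μ.rowLen a - 1) = i
      then μ.rowLen a - 1 else μ.rowLen a := by
  apply eq_of_forall_lt_iff
  intro b
  rw [← mem_iff_lt_rowLen, hν, mem_iff_lt_rowLen]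
  dsimp only
  split_ifs with hend
  · have hpos := mem_iff_lt_rowLen.1 hend.1.1
    constructor
    · rintro ⟨hb, hnot⟩
      refine lt_of_le_of_ne (by omega) fun hb' => hnot ?_
      rwa [show b = μ.rowLen a - 1 by omega]
    · intro hb
      refine ⟨by omega, fun hrem => ?_⟩
      have := μ.eq_rowLen_sub_one_of_isRemovableBox hrem.1
      omega
  · refine ⟨And.left, fun hb => ⟨hb, fun hrem => hend ?_⟩⟩
    rwa [← μ.eq_rowLen_sub_one_of_isRemovableBox hrem.1]

open Classical in
lemma beta_of_removeRemovable {ℓ : ℕ} {ν : YoungDiagram} {i : ZMod ℓ}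
    (hν : ∀ p : ℕ × ℕ, p ∈ ν ↔
      p ∈ μ ∧ ¬ (IsRemovableBox μ p.1 p.2 ∧ resBox ℓ p.1 p.2 = i)) (a : ℕ) :
    ν.beta a = if (μ.beta a : ZMod ℓ) = i + 1 ∧ μ.beta a - 1 ∉ Set.range μ.beta
      then μ.beta a - 1 else μ.beta a := by
  have hcond : (IsRemovableBox μ a (μ.rowLen a - 1) ∧ resBox ℓ a (μ.rowLen a - 1) = i) ↔
      ((μ.beta a : ZMod ℓ) = i + 1 ∧ μ.beta a - 1 ∉ Set.range μ.beta) := by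
    rw [← isRemovableBox_rowLen_sub_one_iff, and_comm (b := IsRemovableBox μ a _)]
    refine and_congr_right fun hrem => ?_
    rw [resBox_rowLen_sub_one μ ℓ (by have := mem_iff_lt_rowLen.1 hrem.1; omega),
      sub_eq_iff_eq_add]
  have hpos : IsRemovableBox μ a (μ.rowLen a - 1) → 0 < μ.rowLen a := fun hrem => by
    have := mem_iff_lt_rowLen.1 hrem.1
    omega
  have hrow := μ.rowLen_of_removeRemovable hν a
  by_cases h : IsRemovableBox μ a (μ.rowLen a - 1) ∧ resBox ℓ a (μ.rowLen a - 1) = i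
  · rw [if_pos h] at hrow
    rw [if_pos (hcond.1 h)]
    have := hpos h.1
    unfold beta
    omega
  · rw [if_neg h] at hrow
    rw [if_neg (mt hcond.2 h), beta, beta, hrow]

end Beta

/-- The row holding the top bead of runner `d` of the abacus. -/
noncomputable def firstRowOfClass (ℓ : ℕ) (μ : YoungDiagram) (d : ZMod ℓ) : ℕ :=
  sInf {a | (μ.beta a : ZMod ℓ) = d}

section Classes

variable {ℓ : ℕ} (μ : YoungDiagram)

lemma exists_beta_cast_eq [NeZero ℓ] (d : ZMod ℓ) : ∃ a, (μ.beta a : ZMod ℓ) = d := by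
  refine ⟨μ.colLen 0 + (-d - (μ.colLen 0 : ZMod ℓ)).val, ?_⟩
  rw [μ.beta_of_colLen_le (Nat.le_add_right _ _)]
  push_cast [ZMod.natCast_val]
  ring

lemma beta_firstRowOfClass [NeZero ℓ] (d : ZMod ℓ) :
    (μ.beta (μ.firstRowOfClass ℓ d) : ZMod ℓ) = d :=
  Nat.sInf_mem (μ.exists_beta_cast_eq d)

lemma firstRowOfClass_le {a : ℕ} {d : ZMod ℓ} (h : (μ.beta a : ZMod ℓ) = d) :
    μ.firstRowOfClass ℓ d ≤ a :=
  Nat.sInf_le h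

lemma beta_le_beta_firstRowOfClass {a : ℕ} {d : ZMod ℓ} (h : (μ.beta a : ZMod ℓ) = d) :
    μ.beta a ≤ μ.beta (μ.firstRowOfClass ℓ d) :=
  μ.beta_strictAnti.antitone (μ.firstRowOfClass_le h)

lemma firstRowOfClass_eq {a : ℕ} {d : ZMod ℓ} (h₁ : (μ.beta a : ZMod ℓ) = d)
    (h₂ : ∀ b < a, (μ.beta b : ZMod ℓ) ≠ d) : μ.firstRowOfClass ℓ d = a :=
  le_antisymm (μ.firstRowOfClass_le h₁) <| not_lt.1 fun h =>
    h₂ _ h (Nat.sInf_mem (s := {b | (μ.beta b : ZMod ℓ) = d}) ⟨a, h₁⟩)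

lemma longestRowWithRes_sub_one [NeZero ℓ] (d : ZMod ℓ) :
    LongestRowWithRes ℓ μ (d - 1) = μ.rowLen (μ.firstRowOfClass ℓ d) := by
  have hub : μ.rowLen (μ.firstRowOfClass ℓ d) ∈ upperBounds
      {n : ℕ | 0 < n ∧ ∃ a : ℕ, μ.rowLen a = n ∧ resBox ℓ a (n - 1) = d - 1} := by
    rintro n ⟨hn, a, rfl, hres⟩
    rw [μ.resBox_rowLen_sub_one ℓ hn, sub_left_inj] at hres
    exact μ.rowLen_anti _ _ (μ.firstRowOfClass_le hres)
  refine le_antisymm (csSup_le' hub) ?_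
  rcases Nat.eq_zero_or_pos (μ.rowLen (μ.firstRowOfClass ℓ d)) with h | h
  · exact h ▸ Nat.zero_le _
  · exact le_csSup ⟨_, hub⟩
      ⟨h, _, rfl, by rw [μ.resBox_rowLen_sub_one ℓ h, μ.beta_firstRowOfClass]⟩

lemma sum_range_longestRowWithRes [NeZero ℓ] :
    ∑ i ∈ Finset.range ℓ, LongestRowWithRes ℓ μ i =
      ∑ d : ZMod ℓ, μ.rowLen (μ.firstRowOfClass ℓ d) := by
  rw [ZMod.sum_range_natCast (LongestRowWithRes ℓ μ),
    ← (Equiv.subRight (1 : ZMod ℓ)).sum_comp (LongestRowWithRes ℓ μ)]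
  simp only [Equiv.subRight_apply, longestRowWithRes_sub_one]

end Classes

def BetaClosed (ℓ : ℕ) (μ : YoungDiagram) : Prop :=
  ∀ x ∈ Set.range μ.beta, x - ℓ ∈ Set.range μ.beta

section BetaClosed

variable {ℓ : ℕ} {μ : YoungDiagram}

lemma BetaClosed.sub_mul_mem (hcl : BetaClosed ℓ μ) {x : ℤ} (hx : x ∈ Set.range μ.beta)
    (k : ℕ) : x - k * ℓ ∈ Set.range μ.beta := by
  induction k with
  | zero => simpa using hx
  | succ k ih => simpa [add_mul, sub_add_eq_sub_sub] using hcl _ ih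

lemma BetaClosed.mem_of_le (hcl : BetaClosed ℓ μ) {x y : ℤ} (hx : x ∈ Set.range μ.beta)
    (hyx : y ≤ x) (hmod : (y : ZMod ℓ) = x) : y ∈ Set.range μ.beta := by
  obtain ⟨k, hk⟩ := (ZMod.intCast_eq_intCast_iff_dvd_sub y x ℓ).1 hmod
  have hy : y = x - k.toNat * ℓ := by
    rcases le_or_gt 0 k with h | h
    · rw [Int.toNat_of_nonneg h]
      linarith
    · have : (ℓ : ℤ) = 0 := by nlinarith
      simp only [this, mul_zero] at hk ⊢
      linarith
  exact hy ▸ hcl.sub_mul_mem hx _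

lemma BetaClosed.mem_iff [NeZero ℓ] (hcl : BetaClosed ℓ μ) (x : ℤ) :
    x ∈ Set.range μ.beta ↔ x ≤ μ.beta (μ.firstRowOfClass ℓ x) :=
  ⟨by rintro ⟨a, rfl⟩; exact μ.beta_le_beta_firstRowOfClass rfl,
    fun h => hcl.mem_of_le ⟨_, rfl⟩ h (μ.beta_firstRowOfClass _).symm⟩

end BetaClosed

/-- If `β_a - ℓ` were not a beta-number, let `c` be the first row with `β_c < β_a - ℓ`: the box
of row `a` in column `β_a - ℓ + c - 1`, a column of length `c`, would have hook length `ℓ`. -/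
lemma betaClosed_of_isCore {ℓ : ℕ} {μ : YoungDiagram} (hcore : IsCore ℓ μ) :
    BetaClosed ℓ μ := by
  classical
  rintro x ⟨a, rfl⟩
  by_contra hy
  have hex : ∃ c, μ.beta c < μ.beta a - ℓ :=
    ⟨μ.colLen 0 + (ℓ + 1 - μ.beta a).toNat, by rw [μ.beta_of_colLen_le (by omega)]; omega⟩
  set c := Nat.find hex
  have hc : μ.beta c < μ.beta a - ℓ := Nat.find_spec hex
  have hac : a < c := μ.beta_strictAnti.lt_iff_gt.1 (by omega)
  have hprev : μ.beta a - ℓ < μ.beta (c - 1) := by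
    have := Nat.find_min hex (show c - 1 < c by omega)
    exact lt_of_le_of_ne (not_lt.1 this) fun h => hy ⟨_, h.symm⟩
  have hca : c ≤ a + ℓ := by
    refine Nat.find_min' hex (lt_of_le_of_ne (by simpa using μ.beta_add_le a ℓ) ?_)
    exact fun h => hy ⟨_, h⟩
  simp only [beta] at hc hprev
  set b := (μ.rowLen a - a - ℓ + c - 1 : ℤ).toNat with hb
  have hcol : μ.colLen b = c - 1 + 1 :=
    μ.colLen_eq_succ (by rw [Nat.sub_add_cancel (by omega)]; omega) (by omega)
  have hab : (a, b) ∈ μ := mem_iff_lt_rowLen.2 (by omega)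
  exact hcore a b hab ⟨1, by unfold hookLen; omega⟩

lemma colLen_zero_pos_of_ne_bot {μ : YoungDiagram} (h : μ ≠ ⊥) : 0 < μ.colLen 0 := by
  by_contra hc
  apply h
  ext p
  simp only [cells_bot, Finset.notMem_empty, iff_false, mem_cells]
  intro hp
  have := mem_iff_lt_colLen.1 (μ.up_left_mem le_rfl (Nat.zero_le p.2) hp)
  omega

lemma exists_isRemovableBox_bottomRes (ℓ : ℕ) {μ : YoungDiagram} (h : μ ≠ ⊥) :
    ∃ a, IsRemovableBox μ a (μ.rowLen a - 1) ∧
      resBox ℓ a (μ.rowLen a - 1) = BottomRes ℓ μ := by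
  have hcol := colLen_zero_pos_of_ne_bot h
  have hrow : 0 < μ.rowLen (μ.colLen 0 - 1) :=
    mem_iff_lt_rowLen.1 (mem_iff_lt_colLen.2 (by omega : μ.colLen 0 - 1 < μ.colLen 0))
  have hbelow := μ.rowLen_eq_zero_of_colLen_le_s19 (show μ.colLen 0 ≤ μ.colLen 0 - 1 + 1 by omega)
  refine ⟨μ.colLen 0 - 1, ⟨?_, ?_, ?_⟩, rfl⟩ <;> rw [mem_iff_lt_rowLen] <;> omega

/-- On the `ℓ`-abacus of beta-numbers of `μ`, the beads of runner `c` lying more than one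
position above the top bead of runner `c - 1` each move down one position, onto runner
`c - 1`. -/
def LowersRunner (ℓ : ℕ) (μ ν : YoungDiagram) (c : ZMod ℓ) : Prop :=
  ∀ a, ν.beta a = if (μ.beta a : ZMod ℓ) = c ∧
    μ.beta (μ.firstRowOfClass ℓ (c - 1)) + 1 < μ.beta a then μ.beta a - 1 else μ.beta a

section LowersRunner

variable {ℓ : ℕ} {μ ν : YoungDiagram} {c : ZMod ℓ}

lemma BetaClosed.lowersRunner_of_canonicalStep [NeZero ℓ] (hcl : BetaClosed ℓ μ)
    (h : CanonicalStep ℓ μ ν) : LowersRunner ℓ μ ν (BottomRes ℓ μ + 1) := by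
  classical
  intro a
  rw [μ.beta_of_removeRemovable h.2 a]
  refine if_congr (and_congr_right fun hc => ?_) rfl rfl
  rw [hcl.mem_iff, Int.cast_sub, Int.cast_one, hc, not_le]
  omega

lemma BetaClosed.beta_firstRowOfClass_sub_one_add_one_lt [NeZero ℓ] (hcl : BetaClosed ℓ μ)
    {a : ℕ} (hc : (μ.beta a : ZMod ℓ) = c) (hgap : μ.beta a - 1 ∉ Set.range μ.beta) :
    μ.beta (μ.firstRowOfClass ℓ (c - 1)) + 1 < μ.beta (μ.firstRowOfClass ℓ c) := by
  rw [hcl.mem_iff, Int.cast_sub, Int.cast_one, hc, not_le] at hgap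
  have := μ.beta_le_beta_firstRowOfClass hc
  omega

lemma beta_pred_of_add_one_mem (μ : YoungDiagram) {a : ℕ}
    (h : μ.beta a + 1 ∈ Set.range μ.beta) : 0 < a ∧ μ.beta (a - 1) = μ.beta a + 1 := by
  obtain ⟨t, ht⟩ := h
  have hta : t < a := μ.beta_strictAnti.lt_iff_gt.1 (by omega)
  have h₁ := μ.beta_strictAnti.antitone (show t ≤ a - 1 by omega)
  have h₂ := μ.beta_succ_lt (a - 1)
  rw [Nat.sub_add_cancel (by omega)] at h₂
  exact ⟨by omega, by omega⟩

lemma LowersRunner.firstRowOfClass_sub_one [NeZero ℓ] (hν : LowersRunner ℓ μ ν c)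
    (hgap : μ.beta (μ.firstRowOfClass ℓ (c - 1)) + 1 < μ.beta (μ.firstRowOfClass ℓ c)) :
    ν.firstRowOfClass ℓ (c - 1) = μ.firstRowOfClass ℓ c ∧
      ν.rowLen (μ.firstRowOfClass ℓ c) + 1 = μ.rowLen (μ.firstRowOfClass ℓ c) := by
  have hP := hν (μ.firstRowOfClass ℓ c)
  rw [if_pos ⟨μ.beta_firstRowOfClass c, hgap⟩] at hP
  have hPQ : μ.firstRowOfClass ℓ c < μ.firstRowOfClass ℓ (c - 1) :=
    μ.beta_strictAnti.lt_iff_gt.1 (by omega)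
  refine ⟨ν.firstRowOfClass_eq (by rw [hP, Int.cast_sub, μ.beta_firstRowOfClass, Int.cast_one])
    fun b hb hbc => ?_, by simp only [beta] at hP; omega⟩
  have hnot : (μ.beta b : ZMod ℓ) ≠ c := fun h => by
    have := μ.firstRowOfClass_le h
    omega
  rw [hν b, if_neg fun h => hnot h.1] at hbc
  have := μ.firstRowOfClass_le hbc
  omega

lemma LowersRunner.firstRowOfClass_self [NeZero ℓ] (hν : LowersRunner ℓ μ ν c)
    (hcl : BetaClosed ℓ μ)
    (hgap : μ.beta (μ.firstRowOfClass ℓ (c - 1)) + 1 < μ.beta (μ.firstRowOfClass ℓ c)) :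
    ν.firstRowOfClass ℓ c = μ.firstRowOfClass ℓ (c - 1) - 1 ∧
      ν.rowLen (μ.firstRowOfClass ℓ (c - 1) - 1) = μ.rowLen (μ.firstRowOfClass ℓ (c - 1)) := by
  have hcc : c - 1 ≠ c := fun h => by rw [h] at hgap; omega
  unfold LowersRunner at hν
  set Q := μ.firstRowOfClass ℓ (c - 1)
  have hcQ : ((μ.beta Q + 1 : ℤ) : ZMod ℓ) = c := by
    rw [Int.cast_add, μ.beta_firstRowOfClass, Int.cast_one, sub_add_cancel]
  obtain ⟨hQpos, hT⟩ := μ.beta_pred_of_add_one_mem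
    ((hcl.mem_iff _).2 (by rw [hcQ]; exact hgap.le))
  have hνT := hν (Q - 1)
  rw [if_neg fun h => by omega] at hνT
  refine ⟨ν.firstRowOfClass_eq (by rw [hνT, hT, hcQ]) fun b hb hbc => ?_,
    by simp only [beta] at hνT hT; omega⟩
  rw [hν b] at hbc
  split_ifs at hbc with hR
  · exact hcc (by rwa [Int.cast_sub, hR.1, Int.cast_one] at hbc)
  · have := μ.beta_strictAnti (show b < Q - 1 by omega)
    exact hR ⟨hbc, by omega⟩

lemma LowersRunner.firstRowOfClass_of_ne [NeZero ℓ] (hν : LowersRunner ℓ μ ν c) {d : ZMod ℓ}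
    (hdc : d ≠ c) (hdc' : d ≠ c - 1) :
    ν.firstRowOfClass ℓ d = μ.firstRowOfClass ℓ d ∧
      ν.rowLen (μ.firstRowOfClass ℓ d) = μ.rowLen (μ.firstRowOfClass ℓ d) := by
  have hE := hν (μ.firstRowOfClass ℓ d)
  rw [if_neg fun h => hdc (μ.beta_firstRowOfClass d ▸ h.1)] at hE
  refine ⟨ν.firstRowOfClass_eq (by rw [hE, μ.beta_firstRowOfClass]) fun b hb hbd => ?_,
    by simp only [beta] at hE; omega⟩
  rw [hν b] at hbd
  split_ifs at hbd with hR
  · exact hdc' (by rwa [Int.cast_sub, hR.1, Int.cast_one, eq_comm] at hbd)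
  · have := μ.firstRowOfClass_le hbd
    omega

lemma LowersRunner.betaClosed [NeZero ℓ] (hν : LowersRunner ℓ μ ν c)
    (hcl : BetaClosed ℓ μ) : BetaClosed ℓ ν := by
  have hcast : ∀ x : ℤ, ((x - ℓ : ℤ) : ZMod ℓ) = x := fun x => by simp
  rintro x ⟨a, rfl⟩
  obtain ⟨b, hb⟩ := hcl _ ⟨a, rfl⟩
  have hab : (μ.beta b : ZMod ℓ) = μ.beta a := by rw [hb, hcast]
  rw [hν a]
  split_ifs with hR
  · by_cases hlow : μ.beta (μ.firstRowOfClass ℓ (c - 1)) + 1 < μ.beta a - ℓ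
    · exact ⟨b, by rw [hν b, if_pos ⟨hab.trans hR.1, by omega⟩]; omega⟩
    · obtain ⟨b', hb'⟩ := hcl.mem_of_le ⟨_, rfl⟩
        (show μ.beta a - 1 - ℓ ≤ μ.beta (μ.firstRowOfClass ℓ (c - 1)) by omega)
        (show ((μ.beta a - 1 - ℓ : ℤ) : ZMod ℓ) = μ.beta (μ.firstRowOfClass ℓ (c - 1)) by
          rw [hcast, μ.beta_firstRowOfClass, Int.cast_sub, hR.1, Int.cast_one])
      exact ⟨b', by rw [hν b', if_neg fun h => by omega]; omega⟩
  · exact ⟨b, by rw [hν b, if_neg fun h => hR ⟨hab ▸ h.1, by omega⟩]; omega⟩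

lemma LowersRunner.sum_rowLen_firstRowOfClass [NeZero ℓ] (hν : LowersRunner ℓ μ ν c)
    (hcl : BetaClosed ℓ μ)
    (hgap : μ.beta (μ.firstRowOfClass ℓ (c - 1)) + 1 < μ.beta (μ.firstRowOfClass ℓ c)) :
    ∑ d, ν.rowLen (ν.firstRowOfClass ℓ d) + 1 = ∑ d, μ.rowLen (μ.firstRowOfClass ℓ d) := by
  have hcc : c - 1 ≠ c := fun h => by rw [h] at hgap; omega
  have hswap : ∀ d, ν.rowLen (ν.firstRowOfClass ℓ d) + (if d = c - 1 then 1 else 0) =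
      μ.rowLen (μ.firstRowOfClass ℓ (Equiv.swap c (c - 1) d)) := by
    intro d
    rcases eq_or_ne d c with rfl | hdc
    · obtain ⟨h₁, h₂⟩ := hν.firstRowOfClass_self hcl hgap
      rw [h₁, h₂, if_neg hcc.symm, Equiv.swap_apply_left, add_zero]
    rcases eq_or_ne d (c - 1) with rfl | hdc'
    · obtain ⟨h₁, h₂⟩ := hν.firstRowOfClass_sub_one hgap
      rw [h₁, if_pos rfl, h₂, Equiv.swap_apply_right]
    · obtain ⟨h₁, h₂⟩ := hν.firstRowOfClass_of_ne hdc hdc'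
      rw [h₁, h₂, if_neg hdc', Equiv.swap_apply_of_ne_of_ne hdc hdc', add_zero]
  calc ∑ d, ν.rowLen (ν.firstRowOfClass ℓ d) + 1
      = ∑ d, (ν.rowLen (ν.firstRowOfClass ℓ d) + if d = c - 1 then 1 else 0) := by
        rw [Finset.sum_add_distrib, Finset.sum_ite_eq' Finset.univ, if_pos (Finset.mem_univ _)]
    _ = ∑ d, μ.rowLen (μ.firstRowOfClass ℓ (Equiv.swap c (c - 1) d)) :=
        Finset.sum_congr rfl fun d _ => hswap d
    _ = ∑ d, μ.rowLen (μ.firstRowOfClass ℓ d) :=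
        Equiv.sum_comp (Equiv.swap c (c - 1)) fun d => μ.rowLen (μ.firstRowOfClass ℓ d)

end LowersRunner

lemma BetaClosed.canonicalStep {ℓ : ℕ} [NeZero ℓ] {μ ν : YoungDiagram}
    (hcl : BetaClosed ℓ μ) (h : CanonicalStep ℓ μ ν) :
    BetaClosed ℓ ν ∧ ∑ i ∈ Finset.range ℓ, LongestRowWithRes ℓ ν i + 1 =
      ∑ i ∈ Finset.range ℓ, LongestRowWithRes ℓ μ i := by
  have hν := hcl.lowersRunner_of_canonicalStep h
  obtain ⟨a, hrem, hres⟩ := exists_isRemovableBox_bottomRes ℓ h.1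
  have hpos : 0 < μ.rowLen a := by
    have := mem_iff_lt_rowLen.1 hrem.1
    omega
  rw [μ.resBox_rowLen_sub_one ℓ hpos, sub_eq_iff_eq_add] at hres
  have hgap := hcl.beta_firstRowOfClass_sub_one_add_one_lt hres
    ((μ.isRemovableBox_rowLen_sub_one_iff a).1 hrem)
  rw [μ.sum_range_longestRowWithRes, ν.sum_range_longestRowWithRes]
  exact ⟨hν.betaClosed hcl, hν.sum_rowLen_firstRowOfClass hcl hgap⟩

lemma BetaClosed.sum_longestRowWithRes_add_of_canonicalStep {ℓ N : ℕ} [NeZero ℓ]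
    {f : ℕ → YoungDiagram} (hcl : BetaClosed ℓ (f 0))
    (hstep : ∀ n < N, CanonicalStep ℓ (f n) (f (n + 1))) :
    ∀ n ≤ N, BetaClosed ℓ (f n) ∧ ∑ i ∈ Finset.range ℓ, LongestRowWithRes ℓ (f n) i + n =
      ∑ i ∈ Finset.range ℓ, LongestRowWithRes ℓ (f 0) i := by
  intro n hn
  induction n with
  | zero => exact ⟨hcl, rfl⟩
  | succ n ih =>
    obtain ⟨hcln, hsum⟩ := ih (by omega)
    obtain ⟨hcl', hsum'⟩ := hcln.canonicalStep (hstep n (by omega))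
    exact ⟨hcl', by omega⟩

lemma sum_range_longestRowWithRes_bot (ℓ : ℕ) [NeZero ℓ] :
    ∑ i ∈ Finset.range ℓ, LongestRowWithRes ℓ ⊥ i = 0 := by
  simp [sum_range_longestRowWithRes, rowLen_bot]

end YoungDiagram

/-- The Coxeter length of the canonical reduced word `w(λ)` of an `ℓ`-core `λ` —
the number of steps in the canonical recursion from `λ` down to the empty
partition — equals `∑_{i=0}^{ℓ-1} λ_{R(i)}`, where `R(i)` is the longest row of
`λ` whose rightmost box has residue `i`. -/
theorem stmt_19 (ℓ N : ℕ) (hℓ : 2 ≤ ℓ) (lam : YoungDiagram)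
    (hcore : IsCore ℓ lam) (f : ℕ → YoungDiagram)
    (h0 : f 0 = lam) (hN : f N = ⊥)
    (hstep : ∀ n < N, CanonicalStep ℓ (f n) (f (n + 1))) :
    N = ∑ i ∈ Finset.range ℓ, LongestRowWithRes ℓ lam (i : ZMod ℓ) := by
  have : NeZero ℓ := ⟨by omega⟩
  subst h0
  obtain ⟨-, hsum⟩ :=
    (YoungDiagram.betaClosed_of_isCore hcore).sum_longestRowWithRes_add_of_canonicalStep
      hstep N le_rfl
  rwa [hN, YoungDiagram.sum_range_longestRowWithRes_bot, zero_add] at hsum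
end
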